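/- arXiv:2504.05709 — 12 statements merged into one kernel-verified Lean document; each statement's English description precedes it below -/
import Mathlib

section
/- For all nonzero elements x, y of a real normed space X, the angular distance satisfies ‖x/‖x‖ − y/‖y‖‖ ≤ 4‖x−y‖/(‖x‖+‖y‖). -/
private lemma dw_aux {X : Type*} [NormedAddCommGroup X] [NormedSpace ℝ X]
    (x y : X) (hx : x ≠ 0) (hy : y ≠ 0) (h : ‖y‖ ≤ ‖x‖) :
    ‖‖x‖⁻¹ • x - ‖y‖⁻¹ • y‖ ≤ 4 * ‖x - y‖ / (‖x‖ + ‖y‖) := by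
  have ha : (0:ℝ) < ‖x‖ := norm_pos_iff.mpr hx
  have hb : (0:ℝ) < ‖y‖ := norm_pos_iff.mpr hy
  have hd : ‖x‖ - ‖y‖ ≤ ‖x - y‖ := norm_sub_norm_le x y
  have hd0 : (0:ℝ) ≤ ‖x - y‖ := norm_nonneg _
  have step : ‖‖x‖⁻¹ • x - ‖y‖⁻¹ • y‖ ≤ 2 * ‖x - y‖ / ‖x‖ := by
    have e : ‖x‖⁻¹ • x - ‖y‖⁻¹ • y = ‖x‖⁻¹ • (x - y) + (‖x‖⁻¹ - ‖y‖⁻¹) • y := by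
      rw [smul_sub, sub_smul]; abel
    rw [e]
    have h1 : ‖‖x‖⁻¹ • (x - y)‖ = ‖x - y‖ / ‖x‖ := by
      rw [norm_smul, Real.norm_eq_abs, abs_of_pos (inv_pos.mpr ha)]
      field_simp
    have h2 : ‖(‖x‖⁻¹ - ‖y‖⁻¹) • y‖ = (‖x‖ - ‖y‖) / ‖x‖ := by
      rw [norm_smul, Real.norm_eq_abs]
      have : ‖x‖⁻¹ - ‖y‖⁻¹ ≤ 0 := by
        simp only [sub_nonpos]
        exact inv_anti₀ hb h
      rw [abs_of_nonpos this]
      field_simp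
      ring
    calc ‖‖x‖⁻¹ • (x - y) + (‖x‖⁻¹ - ‖y‖⁻¹) • y‖
        ≤ ‖‖x‖⁻¹ • (x - y)‖ + ‖(‖x‖⁻¹ - ‖y‖⁻¹) • y‖ := norm_add_le _ _
      _ = ‖x - y‖ / ‖x‖ + (‖x‖ - ‖y‖) / ‖x‖ := by rw [h1, h2]
      _ ≤ 2 * ‖x - y‖ / ‖x‖ := by
          rw [← add_div, div_le_div_iff₀ ha ha]
          nlinarith
  refine step.trans ?_
  rw [div_le_div_iff₀ ha (by positivity)]
  nlinarith

theorem dunkl_williams {X : Type*} [NormedAddCommGroup X] [NormedSpace ℝ X]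
    (x y : X) (hx : x ≠ 0) (hy : y ≠ 0) :
    ‖‖x‖⁻¹ • x - ‖y‖⁻¹ • y‖ ≤ 4 * ‖x - y‖ / (‖x‖ + ‖y‖) := by
  rcases le_total ‖y‖ ‖x‖ with h | h
  · exact dw_aux x y hx hy h
  · have := dw_aux y x hy hx h
    rwa [norm_sub_rev (‖y‖⁻¹ • y), norm_sub_rev y x, add_comm ‖y‖ ‖x‖] at this
end

section
/- For all nonzero elements x, y of a real inner product space X, ‖x/‖x‖ − y/‖y‖‖ ≤ 2‖x−y‖/(‖x‖+‖y‖). -/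
/-!
With `a = ‖x‖`, `b = ‖y‖`, `d = ‖x - y‖` and `u` the distance of the normalized vectors, a real
inner product space satisfies `a b u² = d² - (a - b)²`. As `(a + b)² = 4ab + (a - b)²`, the claim
`(u (a + b))² ≤ (2d)²` reduces to `(a - b)² d² ≤ (a - b)² (a + b)²`, the triangle inequality.
-/

theorem norm_mul_norm_mul_norm_inv_smul_sub_inv_smul_sq {X : Type*} [NormedAddCommGroup X]
    [InnerProductSpace ℝ X] {x y : X} (hx : x ≠ 0) (hy : y ≠ 0) :
    ‖x‖ * ‖y‖ * ‖‖x‖⁻¹ • x - ‖y‖⁻¹ • y‖ ^ 2 = ‖x - y‖ ^ 2 - (‖x‖ - ‖y‖) ^ 2 := by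
  have ha : ‖x‖ ≠ 0 := norm_ne_zero_iff.mpr hx
  have hb : ‖y‖ ≠ 0 := norm_ne_zero_iff.mpr hy
  rw [norm_sub_sq_real, norm_sub_sq_real, norm_smul, norm_smul, real_inner_smul_left,
    real_inner_smul_right]
  simp only [norm_inv, norm_norm]
  field_simp
  ring

theorem dunkl_williams_hilbert {X : Type*} [NormedAddCommGroup X] [InnerProductSpace ℝ X]
    (x y : X) (hx : x ≠ 0) (hy : y ≠ 0) :
    ‖‖x‖⁻¹ • x - ‖y‖⁻¹ • y‖ ≤ 2 * ‖x - y‖ / (‖x‖ + ‖y‖) := by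
  have hab : 0 < ‖x‖ * ‖y‖ := mul_pos (norm_pos_iff.mpr hx) (norm_pos_iff.mpr hy)
  have htri : ‖x - y‖ ^ 2 ≤ (‖x‖ + ‖y‖) ^ 2 :=
    pow_le_pow_left₀ (norm_nonneg _) (norm_sub_le x y) 2
  rw [le_div_iff₀ (by positivity),
    ← pow_le_pow_iff_left₀ (by positivity) (by positivity) two_ne_zero]
  refine le_of_mul_le_mul_left ?_ hab
  calc ‖x‖ * ‖y‖ * (‖‖x‖⁻¹ • x - ‖y‖⁻¹ • y‖ * (‖x‖ + ‖y‖)) ^ 2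
      = (‖x - y‖ ^ 2 - (‖x‖ - ‖y‖) ^ 2) * (‖x‖ + ‖y‖) ^ 2 := by
        rw [← norm_mul_norm_mul_norm_inv_smul_sub_inv_smul_sq hx hy]; ring
    _ = ‖x‖ * ‖y‖ * (2 * ‖x - y‖) ^ 2 - (‖x‖ - ‖y‖) ^ 2 * ((‖x‖ + ‖y‖) ^ 2 - ‖x - y‖ ^ 2) := by
        ring
    _ ≤ ‖x‖ * ‖y‖ * (2 * ‖x - y‖) ^ 2 :=
        sub_le_self _ (mul_nonneg (sq_nonneg _) (sub_nonneg.mpr htri))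
end

section
/- For a real Banach space X of dimension ≥ 2 and α, β > 0, the constant DW(X,α,β) satisfies α+β ≤ DW(X,α,β) ≤ 2(α+β). -/
noncomputable def DW (X : Type*) [NormedAddCommGroup X] [NormedSpace ℝ X] (α β : ℝ) : ℝ :=
  sSup { r : ℝ | ∃ x y : X, x ≠ 0 ∧ y ≠ 0 ∧ x ≠ y ∧
    r = (α * ‖x‖ + β * ‖y‖) / ‖x - y‖ * ‖‖x‖⁻¹ • x - ‖y‖⁻¹ • y‖ }

lemma DW_key {X : Type*} [NormedAddCommGroup X] [NormedSpace ℝ X]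
    (x y : X) (hx : x ≠ 0) (hy : y ≠ 0) :
    ‖x‖ * ‖‖x‖⁻¹ • x - ‖y‖⁻¹ • y‖ ≤ 2 * ‖x - y‖ := by
  have hxn : (0:ℝ) < ‖x‖ := norm_pos_iff.mpr hx
  have hyn : (0:ℝ) < ‖y‖ := norm_pos_iff.mpr hy
  have h1 : ‖x‖ • (‖x‖⁻¹ • x - ‖y‖⁻¹ • y) = x - (‖x‖ * ‖y‖⁻¹) • y := by
    rw [smul_sub, smul_smul, smul_smul, mul_inv_cancel₀ hxn.ne', one_smul]
  have h2 : ‖x‖ * ‖‖x‖⁻¹ • x - ‖y‖⁻¹ • y‖ = ‖x - (‖x‖ * ‖y‖⁻¹) • y‖ := by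
    rw [← h1, norm_smul, Real.norm_of_nonneg hxn.le]
  rw [h2]
  have h3 : x - (‖x‖ * ‖y‖⁻¹) • y = (x - y) + (y - (‖x‖ * ‖y‖⁻¹) • y) := by abel
  have h4 : ‖y - (‖x‖ * ‖y‖⁻¹) • y‖ = |‖y‖ - ‖x‖| := by
    have : y - (‖x‖ * ‖y‖⁻¹) • y = (1 - ‖x‖ * ‖y‖⁻¹) • y := by
      rw [sub_smul, one_smul]
    rw [this, norm_smul, Real.norm_eq_abs]
    rw [show (1 - ‖x‖ * ‖y‖⁻¹) = (‖y‖ - ‖x‖) * ‖y‖⁻¹ by field_simp]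
    rw [abs_mul, abs_of_pos (inv_pos.mpr hyn)]
    field_simp
  have h5 : |‖y‖ - ‖x‖| ≤ ‖y - x‖ := abs_norm_sub_norm_le y x
  have h6 : ‖y - x‖ = ‖x - y‖ := norm_sub_rev y x
  calc ‖x - (‖x‖ * ‖y‖⁻¹) • y‖ ≤ ‖x - y‖ + ‖y - (‖x‖ * ‖y‖⁻¹) • y‖ := by
        rw [h3]; exact norm_add_le _ _
    _ ≤ ‖x - y‖ + ‖x - y‖ := by rw [h4]; linarith [h5, h6.symm ▸ h5]
    _ = 2 * ‖x - y‖ := by ring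

theorem DW_bounds (X : Type*) [NormedAddCommGroup X] [NormedSpace ℝ X] [CompleteSpace X]
    (hdim : 2 ≤ Module.rank ℝ X) (α β : ℝ) (hα : 0 < α) (hβ : 0 < β) :
    α + β ≤ DW X α β ∧ DW X α β ≤ 2 * (α + β) := by
  have hrank : (0:Cardinal) < Module.rank ℝ X := lt_of_lt_of_le (by norm_num) hdim
  obtain ⟨x, hx⟩ := (rank_pos_iff_exists_ne_zero (R := ℝ)).mp hrank
  -- upper bound on every element of the set
  have hub : ∀ r ∈ { r : ℝ | ∃ x y : X, x ≠ 0 ∧ y ≠ 0 ∧ x ≠ y ∧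
      r = (α * ‖x‖ + β * ‖y‖) / ‖x - y‖ * ‖‖x‖⁻¹ • x - ‖y‖⁻¹ • y‖ },
      r ≤ 2 * (α + β) := by
    rintro r ⟨a, b, ha, hb, hab, rfl⟩
    have hd : (0:ℝ) < ‖a - b‖ := norm_pos_iff.mpr (sub_ne_zero.mpr hab)
    have k1 : ‖a‖ * ‖‖a‖⁻¹ • a - ‖b‖⁻¹ • b‖ ≤ 2 * ‖a - b‖ := DW_key a b ha hb
    have k2 : ‖b‖ * ‖‖a‖⁻¹ • a - ‖b‖⁻¹ • b‖ ≤ 2 * ‖a - b‖ := by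
      have := DW_key b a hb ha
      rwa [norm_sub_rev, norm_sub_rev b a] at this
    rw [div_mul_eq_mul_div, div_le_iff₀ hd]
    have : (α * ‖a‖ + β * ‖b‖) * ‖‖a‖⁻¹ • a - ‖b‖⁻¹ • b‖
        = α * (‖a‖ * ‖‖a‖⁻¹ • a - ‖b‖⁻¹ • b‖) + β * (‖b‖ * ‖‖a‖⁻¹ • a - ‖b‖⁻¹ • b‖) := by
      ring
    rw [this]
    have e1 : α * (‖a‖ * ‖‖a‖⁻¹ • a - ‖b‖⁻¹ • b‖) ≤ α * (2 * ‖a - b‖) :=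
      mul_le_mul_of_nonneg_left k1 hα.le
    have e2 : β * (‖b‖ * ‖‖a‖⁻¹ • a - ‖b‖⁻¹ • b‖) ≤ β * (2 * ‖a - b‖) :=
      mul_le_mul_of_nonneg_left k2 hβ.le
    nlinarith
  have hbdd : BddAbove { r : ℝ | ∃ x y : X, x ≠ 0 ∧ y ≠ 0 ∧ x ≠ y ∧
      r = (α * ‖x‖ + β * ‖y‖) / ‖x - y‖ * ‖‖x‖⁻¹ • x - ‖y‖⁻¹ • y‖ } :=
    ⟨2 * (α + β), hub⟩
  constructor
  · -- lower bound: witness y = -x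
    have hxn : (0:ℝ) < ‖x‖ := norm_pos_iff.mpr hx
    have hmem : α + β ∈ { r : ℝ | ∃ x y : X, x ≠ 0 ∧ y ≠ 0 ∧ x ≠ y ∧
        r = (α * ‖x‖ + β * ‖y‖) / ‖x - y‖ * ‖‖x‖⁻¹ • x - ‖y‖⁻¹ • y‖ } := by
      refine ⟨x, -x, hx, neg_ne_zero.mpr hx, ?_, ?_⟩
      · intro h
        apply hx
        have : x + x = 0 := by rw [← sub_neg_eq_add, ← h]; simp
        have h2 : (2:ℝ) • x = 0 := by rw [two_smul]; exact this
        simpa using (smul_eq_zero.mp h2).resolve_left (by norm_num)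
      · have e1 : x - -x = (2:ℝ) • x := by rw [two_smul]; abel
        have e2 : ‖x‖⁻¹ • x - ‖-x‖⁻¹ • (-x) = (2 * ‖x‖⁻¹) • x := by
          rw [norm_neg, smul_neg, sub_neg_eq_add, ← two_smul ℝ, smul_smul]
        rw [e1, e2, norm_smul, norm_smul, norm_neg, Real.norm_ofNat,
          Real.norm_eq_abs, abs_mul, abs_two, abs_of_pos (inv_pos.mpr hxn)]
        field_simp
    exact le_csSup hbdd hmem
  · exact Real.sSup_le hub (by positivity)
end

section
/- For a real Banach space X and α, β > 0, DW(X,α,β) = sup{ ‖x+y‖ / ‖(1/α)(1−βt)x + ty‖ : x, y ∈ S_X, 0 < t < 1/β }. -/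
theorem DW_eq_sup (X : Type*) [NormedAddCommGroup X] [NormedSpace ℝ X] [CompleteSpace X]
    (α β : ℝ) (hα : 0 < α) (hβ : 0 < β) :
    DW X α β = sSup { r : ℝ | ∃ x y : X, ‖x‖ = 1 ∧ ‖y‖ = 1 ∧ ∃ t : ℝ, 0 < t ∧ t < 1 / β ∧
      r = ‖x + y‖ / ‖((1 - β * t) / α) • x + t • y‖ } := by
  unfold DW
  congr 1
  ext r
  constructor
  · rintro ⟨x, y, hx, hy, hxy, rfl⟩
    have hxn : (0:ℝ) < ‖x‖ := norm_pos_iff.mpr hx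
    have hyn : (0:ℝ) < ‖y‖ := norm_pos_iff.mpr hy
    set s : ℝ := α * ‖x‖ + β * ‖y‖ with hs_def
    have hs : (0:ℝ) < s := by positivity
    have hd : (0:ℝ) < ‖x - y‖ := by
      rw [norm_pos_iff, sub_ne_zero]; exact hxy
    refine ⟨‖x‖⁻¹ • x, -(‖y‖⁻¹ • y), ?_, ?_, ‖y‖ / s, by positivity, ?_, ?_⟩
    · rw [norm_smul, Real.norm_eq_abs, abs_of_pos (inv_pos.mpr hxn), inv_mul_cancel₀ hxn.ne']
    · rw [norm_neg, norm_smul, Real.norm_eq_abs, abs_of_pos (inv_pos.mpr hyn),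
        inv_mul_cancel₀ hyn.ne']
    · rw [div_lt_div_iff₀ hs hβ, one_mul]
      nlinarith
    · have hkey : ((1 - β * (‖y‖ / s)) / α) • (‖x‖⁻¹ • x) + (‖y‖ / s) • (-(‖y‖⁻¹ • y))
          = s⁻¹ • (x - y) := by
        match_scalars <;>
        · rw [hs_def]
          field_simp
          all_goals ring
      rw [hkey, norm_smul, Real.norm_eq_abs, abs_of_pos (inv_pos.mpr hs),
        ← sub_eq_add_neg, eq_div_iff (by positivity : s⁻¹ * ‖x - y‖ ≠ 0)]
      field_simp
  · rintro ⟨u, v, hu, hv, t, ht0, ht1, rfl⟩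
    have hu0 : u ≠ 0 := by intro h; rw [h, norm_zero] at hu; norm_num at hu
    by_cases h : u + v = 0
    · refine ⟨u, (2:ℝ) • u, hu0, by simpa using hu0, ?_, ?_⟩
      · intro heq
        have : ((2:ℝ) - 1) • u = 0 := by rw [sub_smul, one_smul, ← heq, sub_self]
        norm_num at this
        exact hu0 this
      · rw [h, norm_zero, zero_div]
        have : ‖u‖⁻¹ • u - ‖(2:ℝ) • u‖⁻¹ • ((2:ℝ) • u) = 0 := by
          rw [norm_smul, smul_smul, hu, Real.norm_eq_abs]
          norm_num
        rw [this, norm_zero, mul_zero]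
    · have hbt : β * t < 1 := by
        have := (lt_div_iff₀ hβ).mp ht1
        linarith
      set c : ℝ := (1 - β * t) / α with hc_def
      have hc : (0:ℝ) < c := div_pos (by linarith) hα
      have hnc : ‖c • u‖ = c := by
        rw [norm_smul, hu, mul_one, Real.norm_eq_abs, abs_of_pos hc]
      have hnt : ‖(-t) • v‖ = t := by
        rw [norm_smul, hv, mul_one, Real.norm_eq_abs, abs_neg, abs_of_pos ht0]
      refine ⟨c • u, (-t) • v, smul_ne_zero hc.ne' hu0, ?_, ?_, ?_⟩
      · refine smul_ne_zero (neg_ne_zero.mpr ht0.ne') ?_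
        intro hv0; rw [hv0, norm_zero] at hv; norm_num at hv
      · intro heq
        have hct : c = t := by rw [← hnc, heq, hnt]
        have hz : c • (u + v) = 0 := by
          rw [smul_add, heq, hct, neg_smul, neg_add_cancel]
        exact h ((smul_eq_zero.mp hz).resolve_left hc.ne')
      · have hat : α * c + β * t = 1 := by
          rw [hc_def]; field_simp; ring
        have h1 : c • u - (-t) • v = c • u + t • v := by
          rw [neg_smul, sub_neg_eq_add]
        have h2 : ‖c • u‖⁻¹ • (c • u) - ‖(-t) • v‖⁻¹ • ((-t) • v) = u + v := by
          have ht' : t⁻¹ * -t = -1 := by field_simp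
          rw [hnc, hnt, smul_smul, smul_smul, inv_mul_cancel₀ hc.ne', one_smul, ht',
            neg_one_smul, sub_neg_eq_add]
        rw [h1, h2, hnc, hnt, hat]
        ring
end

section
/- For a real Banach space X and α, β > 0, DW(X,α,β) = sup over u, v ∈ S_X of ‖u+v‖ divided by the minimum over 0 < t < 1/β of ‖(1/α)(1−βt)u + tv‖. -/
section Aux

variable {X : Type*} [NormedAddCommGroup X] [NormedSpace ℝ X]

lemma aux_bound (α β : ℝ) (hα : 0 < α) (hβ : 0 < β) (u v : X) (hu : ‖u‖ = 1) (hv : ‖v‖ = 1)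
    (t : ℝ) (ht0 : 0 < t) (ht1 : t < 1 / β) :
    ‖u + v‖ ≤ 2 * (α + β) * ‖((1 - β * t) / α) • u + t • v‖ := by
  set a := (1 - β * t) / α with ha_def
  set w := ((1 - β * t) / α) • u + t • v with hw_def
  have hbt : β * t < 1 := by
    rw [lt_div_iff₀ hβ] at ht1; nlinarith
  have ha : 0 < a := div_pos (by linarith) hα
  have h1 : ‖a • u‖ = a := by rw [norm_smul, hu, mul_one, Real.norm_eq_abs, abs_of_pos ha]
  have h2 : ‖t • v‖ = t := by rw [norm_smul, hv, mul_one, Real.norm_eq_abs, abs_of_pos ht0]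
  have h3 : a ≤ ‖w‖ + t := by
    have e : w - t • v = a • u := by rw [hw_def]; abel
    calc a = ‖w - t • v‖ := by rw [e, h1]
    _ ≤ ‖w‖ + ‖t • v‖ := norm_sub_le _ _
    _ = ‖w‖ + t := by rw [h2]
  have h4 : t ≤ ‖w‖ + a := by
    have e : w - a • u = t • v := by rw [hw_def]; abel
    calc t = ‖w - a • u‖ := by rw [e, h2]
    _ ≤ ‖w‖ + ‖a • u‖ := norm_sub_le _ _
    _ = ‖w‖ + a := by rw [h1]
  have hab : |a - t| ≤ ‖w‖ := abs_sub_le_iff.mpr ⟨by linarith, by linarith⟩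
  have h5 : a * ‖u + v‖ ≤ 2 * ‖w‖ := by
    have e : a • (u + v) = w + (a - t) • v := by rw [hw_def]; module
    calc a * ‖u + v‖ = ‖a • (u + v)‖ := by
          rw [norm_smul, Real.norm_eq_abs, abs_of_pos ha]
    _ = ‖w + (a - t) • v‖ := by rw [e]
    _ ≤ ‖w‖ + ‖(a - t) • v‖ := norm_add_le _ _
    _ = ‖w‖ + |a - t| := by rw [norm_smul, hv, mul_one, Real.norm_eq_abs]
    _ ≤ 2 * ‖w‖ := by linarith
  have h6 : t * ‖u + v‖ ≤ 2 * ‖w‖ := by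
    have e : t • (u + v) = w + (t - a) • u := by rw [hw_def]; module
    calc t * ‖u + v‖ = ‖t • (u + v)‖ := by
          rw [norm_smul, Real.norm_eq_abs, abs_of_pos ht0]
    _ = ‖w + (t - a) • u‖ := by rw [e]
    _ ≤ ‖w‖ + ‖(t - a) • u‖ := norm_add_le _ _
    _ = ‖w‖ + |a - t| := by rw [norm_smul, hu, mul_one, Real.norm_eq_abs, abs_sub_comm]
    _ ≤ 2 * ‖w‖ := by linarith
  have h7 : α * a + β * t = 1 := by
    rw [ha_def]; field_simp; ring
  nlinarith [mul_le_mul_of_nonneg_left h5 hα.le, mul_le_mul_of_nonneg_left h6 hβ.le,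
    norm_nonneg (u + v), norm_nonneg w]

lemma aux_vec (α β : ℝ) (hα : 0 < α) (hβ : 0 < β) (x y : X) (hx : x ≠ 0) (hy : y ≠ 0) :
    ((1 - β * (‖y‖ / (α * ‖x‖ + β * ‖y‖))) / α) • (‖x‖⁻¹ • x)
      + (‖y‖ / (α * ‖x‖ + β * ‖y‖)) • (-(‖y‖⁻¹ • y))
      = (α * ‖x‖ + β * ‖y‖)⁻¹ • (x - y) := by
  have hnx : (0:ℝ) < ‖x‖ := norm_pos_iff.mpr hx
  have hny : (0:ℝ) < ‖y‖ := norm_pos_iff.mpr hy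
  have hD : (0:ℝ) < α * ‖x‖ + β * ‖y‖ := by positivity
  have e1 : (1 - β * (‖y‖ / (α * ‖x‖ + β * ‖y‖))) / α * ‖x‖⁻¹ = (α * ‖x‖ + β * ‖y‖)⁻¹ := by
    field_simp
    ring
  have e2 : (‖y‖ / (α * ‖x‖ + β * ‖y‖)) * ‖y‖⁻¹ = (α * ‖x‖ + β * ‖y‖)⁻¹ := by
    field_simp
  rw [smul_smul, smul_neg, smul_smul, e1, e2, smul_sub, sub_eq_add_neg]

end Aux

section Sets

variable (X : Type*) [NormedAddCommGroup X] [NormedSpace ℝ X] (α β : ℝ)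

/-- The inner minimization set. -/
def Sset (u v : X) : Set ℝ :=
  { s : ℝ | ∃ t : ℝ, 0 < t ∧ t < 1 / β ∧ s = ‖((1 - β * t) / α) • u + t • v‖ }

/-- The DW defining set. -/
def Lset : Set ℝ :=
  { r : ℝ | ∃ x y : X, x ≠ 0 ∧ y ≠ 0 ∧ x ≠ y ∧
    r = (α * ‖x‖ + β * ‖y‖) / ‖x - y‖ * ‖‖x‖⁻¹ • x - ‖y‖⁻¹ • y‖ }

/-- The right-hand side set. -/
def Rset : Set ℝ :=
  { r : ℝ | ∃ u v : X, ‖u‖ = 1 ∧ ‖v‖ = 1 ∧ r = ‖u + v‖ / sInf (Sset X α β u v) }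

variable {X α β}

lemma Sset_nonempty (hβ : 0 < β) (u v : X) : (Sset X α β u v).Nonempty := by
  refine ⟨_, 1 / (2 * β), by positivity, ?_, rfl⟩
  rw [div_lt_div_iff₀ (by positivity) hβ]
  nlinarith

lemma Sset_bddBelow (u v : X) : BddBelow (Sset X α β u v) :=
  ⟨0, by rintro s ⟨t, _, _, rfl⟩; exact norm_nonneg _⟩

lemma Sset_lb (hα : 0 < α) (hβ : 0 < β) {u v : X} (hu : ‖u‖ = 1) (hv : ‖v‖ = 1) {s : ℝ}
    (hs : s ∈ Sset X α β u v) : ‖u + v‖ / (2 * (α + β)) ≤ s := by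
  obtain ⟨t, ht0, ht1, rfl⟩ := hs
  rw [div_le_iff₀ (by positivity)]
  calc ‖u + v‖ ≤ 2 * (α + β) * ‖((1 - β * t) / α) • u + t • v‖ :=
        aux_bound α β hα hβ u v hu hv t ht0 ht1
  _ = ‖((1 - β * t) / α) • u + t • v‖ * (2 * (α + β)) := mul_comm _ _

lemma Sset_inf_nonneg (hβ : 0 < β) (u v : X) : 0 ≤ sInf (Sset X α β u v) :=
  le_csInf (Sset_nonempty hβ u v) (by rintro s ⟨t, _, _, rfl⟩; exact norm_nonneg _)

lemma Sset_inf_lb (hα : 0 < α) (hβ : 0 < β) {u v : X} (hu : ‖u‖ = 1) (hv : ‖v‖ = 1) :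
    ‖u + v‖ / (2 * (α + β)) ≤ sInf (Sset X α β u v) :=
  le_csInf (Sset_nonempty hβ u v) fun _ hs => Sset_lb hα hβ hu hv hs

lemma Rset_le (hα : 0 < α) (hβ : 0 < β) : ∀ r ∈ Rset X α β, r ≤ 2 * (α + β) := by
  rintro r ⟨u, v, hu, hv, rfl⟩
  have hI := Sset_inf_lb hα hβ hu hv
  rcases eq_or_lt_of_le (Sset_inf_nonneg hβ u v) with h | h
  · rw [← h, div_zero]; positivity
  · rw [div_le_iff₀ h]
    rw [div_le_iff₀ (by positivity : (0:ℝ) < 2 * (α + β))] at hI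
    linarith

lemma Lset_nonneg (hα : 0 < α) (hβ : 0 < β) : ∀ r ∈ Lset X α β, 0 ≤ r := by
  rintro r ⟨x, y, hx, hy, hxy, rfl⟩
  have hnx : (0:ℝ) < ‖x‖ := norm_pos_iff.mpr hx
  have hny : (0:ℝ) < ‖y‖ := norm_pos_iff.mpr hy
  positivity

/-- Elements of L arising from unit vectors and a parameter t. -/
lemma Lset_elem (hα : 0 < α) (hβ : 0 < β) {u v : X} (hu : ‖u‖ = 1) (hv : ‖v‖ = 1) {t : ℝ} (ht0 : 0 < t)
    (ht1 : t < 1 / β) (hw : ((1 - β * t) / α) • u + t • v ≠ 0) :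
    ‖u + v‖ / ‖((1 - β * t) / α) • u + t • v‖ ∈ Lset X α β := by
  have hbt : β * t < 1 := by rw [lt_div_iff₀ hβ] at ht1; nlinarith
  have ha : 0 < (1 - β * t) / α := div_pos (by linarith) hα
  have hu0 : u ≠ 0 := by intro h; rw [h, norm_zero] at hu; norm_num at hu
  have hv0 : v ≠ 0 := by intro h; rw [h, norm_zero] at hv; norm_num at hv
  refine ⟨((1 - β * t) / α) • u, -(t • v), smul_ne_zero ha.ne' hu0,
    neg_ne_zero.mpr (smul_ne_zero ht0.ne' hv0), ?_, ?_⟩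
  · intro h
    apply hw
    have : ((1 - β * t) / α) • u - -(t • v) = ((1 - β * t) / α) • u + t • v :=
      sub_neg_eq_add _ _
    rw [← this, h, sub_self]
  · have hnx : ‖((1 - β * t) / α) • u‖ = (1 - β * t) / α := by
      rw [norm_smul, hu, mul_one, Real.norm_eq_abs, abs_of_pos ha]
    have hny : ‖-(t • v)‖ = t := by
      rw [norm_neg, norm_smul, hv, mul_one, Real.norm_eq_abs, abs_of_pos ht0]
    rw [hnx, hny, sub_neg_eq_add]
    have e1 : α * ((1 - β * t) / α) + β * t = 1 := by
      field_simp
      ring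
    have e2 : (((1 - β * t) / α))⁻¹ • (((1 - β * t) / α) • u) = u := by
      rw [smul_smul, inv_mul_cancel₀ ha.ne', one_smul]
    have e3 : t⁻¹ • (-(t • v)) = -v := by
      rw [smul_neg, smul_smul, inv_mul_cancel₀ ht0.ne', one_smul]
    rw [e1, e2, e3, sub_neg_eq_add, one_div, inv_mul_eq_div]

lemma Lset_le (hα : 0 < α) (hβ : 0 < β) : ∀ r ∈ Lset X α β, r ≤ 2 * (α + β) := by
  rintro r ⟨x, y, hx, hy, hxy, rfl⟩
  have hnx : (0:ℝ) < ‖x‖ := norm_pos_iff.mpr hx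
  have hny : (0:ℝ) < ‖y‖ := norm_pos_iff.mpr hy
  have hD : (0:ℝ) < α * ‖x‖ + β * ‖y‖ := by positivity
  have hxyne : (0:ℝ) < ‖x - y‖ := norm_pos_iff.mpr (sub_ne_zero.mpr hxy)
  have hu : ‖‖x‖⁻¹ • x‖ = 1 := by
    rw [norm_smul, Real.norm_eq_abs, abs_of_pos (inv_pos.mpr hnx), inv_mul_cancel₀ hnx.ne']
  have hv : ‖-(‖y‖⁻¹ • y)‖ = 1 := by
    rw [norm_neg, norm_smul, Real.norm_eq_abs, abs_of_pos (inv_pos.mpr hny),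
      inv_mul_cancel₀ hny.ne']
  have ht0 : 0 < ‖y‖ / (α * ‖x‖ + β * ‖y‖) := by positivity
  have ht1 : ‖y‖ / (α * ‖x‖ + β * ‖y‖) < 1 / β := by
    rw [div_lt_div_iff₀ hD hβ]; nlinarith
  have key := aux_bound α β hα hβ _ _ hu hv _ ht0 ht1
  rw [aux_vec α β hα hβ x y hx hy, norm_smul, Real.norm_eq_abs,
    abs_of_pos (inv_pos.mpr hD)] at key
  have hsub : ‖x‖⁻¹ • x - ‖y‖⁻¹ • y = ‖x‖⁻¹ • x + -(‖y‖⁻¹ • y) := sub_eq_add_neg _ _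
  rw [hsub]
  rw [div_mul_eq_mul_div, div_le_iff₀ hxyne]
  calc (α * ‖x‖ + β * ‖y‖) * ‖‖x‖⁻¹ • x + -(‖y‖⁻¹ • y)‖
      ≤ (α * ‖x‖ + β * ‖y‖) * (2 * (α + β) * ((α * ‖x‖ + β * ‖y‖)⁻¹ * ‖x - y‖)) :=
        mul_le_mul_of_nonneg_left key hD.le
  _ = 2 * (α + β) * ‖x - y‖ := by field_simp

end Sets

theorem DW_eq_sup_min (X : Type*) [NormedAddCommGroup X] [NormedSpace ℝ X] [CompleteSpace X]
    (α β : ℝ) (hα : 0 < α) (hβ : 0 < β) :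
    DW X α β = sSup { r : ℝ | ∃ u v : X, ‖u‖ = 1 ∧ ‖v‖ = 1 ∧
      r = ‖u + v‖ / sInf { s : ℝ | ∃ t : ℝ, 0 < t ∧ t < 1 / β ∧
        s = ‖((1 - β * t) / α) • u + t • v‖ } } := by
  show sSup (Lset X α β) = sSup (Rset X α β)
  rcases subsingleton_or_nontrivial X with hX | hX
  · have hL : Lset X α β = ∅ := by
      rw [Set.eq_empty_iff_forall_notMem]
      rintro r ⟨x, y, hx, -⟩
      exact hx (Subsingleton.elim x 0)
    have hR : Rset X α β = ∅ := by
      rw [Set.eq_empty_iff_forall_notMem]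
      rintro r ⟨u, v, hu, -⟩
      rw [Subsingleton.elim u (0 : X), norm_zero] at hu
      norm_num at hu
    rw [hL, hR]
  · obtain ⟨x₀, hx₀⟩ := exists_ne (0 : X)
    set e : X := ‖x₀‖⁻¹ • x₀ with he_def
    have hnx₀ : (0:ℝ) < ‖x₀‖ := norm_pos_iff.mpr hx₀
    have he : ‖e‖ = 1 := by
      rw [he_def, norm_smul, Real.norm_eq_abs, abs_of_pos (inv_pos.mpr hnx₀),
        inv_mul_cancel₀ hnx₀.ne']
    have he0 : e ≠ 0 := by intro h; rw [h, norm_zero] at he; norm_num at he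
    have hene : e ≠ -e := by
      intro h
      apply he0
      have h2 : e + e = 0 := by nth_rewrite 1 [h]; exact neg_add_cancel e
      have : (2:ℝ) • e = 0 := by rw [two_smul]; exact h2
      simpa using this
    have hLne : (Lset X α β).Nonempty :=
      ⟨_, e, -e, he0, neg_ne_zero.mpr he0, hene, rfl⟩
    have hRne : (Rset X α β).Nonempty := ⟨_, e, e, he, he, rfl⟩
    have hLbdd : BddAbove (Lset X α β) := ⟨2 * (α + β), Lset_le hα hβ⟩
    have hRbdd : BddAbove (Rset X α β) := ⟨2 * (α + β), Rset_le hα hβ⟩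
    apply le_antisymm
    · -- sSup L ≤ sSup R
      apply csSup_le hLne
      rintro r ⟨x, y, hx, hy, hxy, rfl⟩
      have hnx : (0:ℝ) < ‖x‖ := norm_pos_iff.mpr hx
      have hny : (0:ℝ) < ‖y‖ := norm_pos_iff.mpr hy
      have hD : (0:ℝ) < α * ‖x‖ + β * ‖y‖ := by positivity
      have hxyne : (0:ℝ) < ‖x - y‖ := norm_pos_iff.mpr (sub_ne_zero.mpr hxy)
      set u : X := ‖x‖⁻¹ • x with hu_def
      set v : X := -(‖y‖⁻¹ • y) with hv_def
      have hu : ‖u‖ = 1 := by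
        rw [hu_def, norm_smul, Real.norm_eq_abs, abs_of_pos (inv_pos.mpr hnx),
          inv_mul_cancel₀ hnx.ne']
      have hv : ‖v‖ = 1 := by
        rw [hv_def, norm_neg, norm_smul, Real.norm_eq_abs, abs_of_pos (inv_pos.mpr hny),
          inv_mul_cancel₀ hny.ne']
      have hmemR : ‖u + v‖ / sInf (Sset X α β u v) ∈ Rset X α β := ⟨u, v, hu, hv, rfl⟩
      have ht0 : 0 < ‖y‖ / (α * ‖x‖ + β * ‖y‖) := by positivity
      have ht1 : ‖y‖ / (α * ‖x‖ + β * ‖y‖) < 1 / β := by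
        rw [div_lt_div_iff₀ hD hβ]; nlinarith
      have hs₀mem : ‖x - y‖ / (α * ‖x‖ + β * ‖y‖) ∈ Sset X α β u v := by
        refine ⟨‖y‖ / (α * ‖x‖ + β * ‖y‖), ht0, ht1, ?_⟩
        rw [hu_def, hv_def, aux_vec α β hα hβ x y hx hy, norm_smul, Real.norm_eq_abs,
          abs_of_pos (inv_pos.mpr hD), inv_mul_eq_div]
      have hIle : sInf (Sset X α β u v) ≤ ‖x - y‖ / (α * ‖x‖ + β * ‖y‖) :=
        csInf_le (Sset_bddBelow u v) hs₀mem
      have hsub : ‖x‖⁻¹ • x - ‖y‖⁻¹ • y = u + v := by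
        rw [hu_def, hv_def, sub_eq_add_neg]
      rw [hsub]
      have hval : (α * ‖x‖ + β * ‖y‖) / ‖x - y‖ * ‖u + v‖
          = ‖u + v‖ / (‖x - y‖ / (α * ‖x‖ + β * ‖y‖)) := by
        field_simp
      rw [hval]
      refine le_trans ?_ (le_csSup hRbdd hmemR)
      rcases eq_or_lt_of_le (Sset_inf_nonneg hβ u v) with hI | hI
      · -- sInf = 0 forces ‖u+v‖ = 0
        have hlb := Sset_inf_lb hα hβ hu hv
        rw [← hI] at hlb
        have huv : ‖u + v‖ = 0 := by
          have h1 : ‖u + v‖ / (2 * (α + β)) ≤ 0 := hlb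
          have h2 : 0 ≤ ‖u + v‖ := norm_nonneg _
          rw [div_le_iff₀ (by positivity : (0:ℝ) < 2 * (α + β))] at h1
          nlinarith
        rw [huv, zero_div, zero_div]
      · gcongr
    · -- sSup R ≤ sSup L
      apply csSup_le hRne
      rintro r ⟨u, v, hu, hv, rfl⟩
      rcases eq_or_lt_of_le (Sset_inf_nonneg hβ u v) with hI | hI
      · rw [← hI, div_zero]
        obtain ⟨r₀, hr₀⟩ := hLne
        exact (Lset_nonneg hα hβ r₀ hr₀).trans (le_csSup hLbdd hr₀)
      · rw [Real.le_sSup_iff hLbdd hLne]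
        intro ε hε
        by_cases huv : ‖u + v‖ = 0
        · obtain ⟨r₀, hr₀⟩ := hLne
          refine ⟨r₀, hr₀, ?_⟩
          rw [huv, zero_div]
          linarith [Lset_nonneg hα hβ r₀ hr₀]
        · have huv' : 0 < ‖u + v‖ := (norm_nonneg _).lt_of_ne (Ne.symm huv)
          set I := sInf (Sset X α β u v) with hI_def
          set r := ‖u + v‖ / I with hr_def
          have hrpos : 0 < r := div_pos huv' hI
          set q := max (r + ε) (r / 2) with hq_def
          have hq0 : 0 < q := lt_max_of_lt_right (by linarith)
          have hqr : q < r := max_lt (by linarith) (by linarith)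
          have hqε : r + ε ≤ q := le_max_left _ _
          have hIr : I * r = ‖u + v‖ := by
            rw [hr_def, mul_div_cancel₀ _ hI.ne']
          have hc : I < ‖u + v‖ / q := by
            rw [lt_div_iff₀ hq0, ← hIr]
            exact mul_lt_mul_of_pos_left hqr hI
          obtain ⟨s, hs, hslt⟩ := exists_lt_of_csInf_lt (Sset_nonempty hβ u v) hc
          have hlbs := Sset_lb hα hβ hu hv hs
          have hspos : 0 < s := lt_of_lt_of_le (by positivity) hlbs
          obtain ⟨t, ht0, ht1, hseq⟩ := hs
          have hwne : ((1 - β * t) / α) • u + t • v ≠ 0 := by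
            intro h
            rw [hseq, h, norm_zero] at hspos
            exact lt_irrefl 0 hspos
          refine ⟨‖u + v‖ / ‖((1 - β * t) / α) • u + t • v‖,
            Lset_elem hα hβ hu hv ht0 ht1 hwne, ?_⟩
          have hqeq : ‖u + v‖ / (‖u + v‖ / q) = q := by
            field_simp
          have := div_lt_div_of_pos_left huv' hspos hslt
          rw [hqeq] at this
          rw [← hseq]
          linarith
end

section
/- Let X be a real Banach space, (f_n) a sequence in the closed unit ball of X*, (x_n) a sequence in the closed unit ball of X with lim f_n(x_n) = 1, and (g_n) a sequence in the closed unit ball of X* with liminf g_n(x_n) > 0. Then for α, β > 0, DW(X,α,β) ≥ (α+β)·max{ liminf_n ‖g_n(x_n)f_n − g_n‖, 1 }. -/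
open Filter

lemma aux_norm {X : Type*} [NormedAddCommGroup X] [NormedSpace ℝ X] (x y : X)
    (hx : x ≠ 0) (hy : y ≠ 0) :
    ‖‖x‖⁻¹ • x - ‖y‖⁻¹ • y‖ * ‖x‖ ≤ 2 * ‖x - y‖ := by
  have hx0 : (0:ℝ) < ‖x‖ := norm_pos_iff.2 hx
  have hy0 : (0:ℝ) < ‖y‖ := norm_pos_iff.2 hy
  have key : ‖x‖⁻¹ • x - ‖y‖⁻¹ • y = ‖x‖⁻¹ • (x - y) + (‖x‖⁻¹ - ‖y‖⁻¹) • y := by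
    rw [smul_sub, sub_smul]; abel
  have h1 : ‖‖x‖⁻¹ • x - ‖y‖⁻¹ • y‖ ≤ ‖x‖⁻¹ * ‖x - y‖ + |‖x‖⁻¹ - ‖y‖⁻¹| * ‖y‖ := by
    rw [key]
    refine (norm_add_le _ _).trans ?_
    rw [norm_smul, norm_smul, Real.norm_eq_abs, Real.norm_eq_abs, abs_of_pos (inv_pos.2 hx0)]
  have h2 : |‖x‖⁻¹ - ‖y‖⁻¹| * ‖y‖ ≤ ‖x - y‖ * ‖x‖⁻¹ := by
    have e : ‖x‖⁻¹ - ‖y‖⁻¹ = (‖y‖ - ‖x‖) / (‖x‖ * ‖y‖) := by field_simp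
    have habs : |‖y‖ - ‖x‖| ≤ ‖x - y‖ := by
      rw [norm_sub_rev]; exact abs_norm_sub_norm_le _ _
    rw [e, abs_div, abs_of_pos (mul_pos hx0 hy0)]
    rw [div_mul_eq_mul_div, div_le_iff₀ (mul_pos hx0 hy0)]
    have : ‖x - y‖ * ‖x‖⁻¹ * (‖x‖ * ‖y‖) = ‖x - y‖ * ‖y‖ := by field_simp
    rw [this]
    exact mul_le_mul_of_nonneg_right habs hy0.le
  have h3 : ‖‖x‖⁻¹ • x - ‖y‖⁻¹ • y‖ ≤ 2 * ‖x - y‖ * ‖x‖⁻¹ := by nlinarith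
  calc ‖‖x‖⁻¹ • x - ‖y‖⁻¹ • y‖ * ‖x‖ ≤ (2 * ‖x - y‖ * ‖x‖⁻¹) * ‖x‖ :=
        mul_le_mul_of_nonneg_right h3 hx0.le
    _ = 2 * ‖x - y‖ := by field_simp

lemma DW_set_bdd {X : Type*} [NormedAddCommGroup X] [NormedSpace ℝ X] {α β : ℝ}
    (hα : 0 ≤ α) (hβ : 0 ≤ β) :
    ∀ r ∈ { r : ℝ | ∃ x y : X, x ≠ 0 ∧ y ≠ 0 ∧ x ≠ y ∧
      r = (α * ‖x‖ + β * ‖y‖) / ‖x - y‖ * ‖‖x‖⁻¹ • x - ‖y‖⁻¹ • y‖ }, r ≤ 2 * (α + β) := by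
  rintro r ⟨x, y, hx, hy, hxy, rfl⟩
  have hd0 : (0:ℝ) < ‖x - y‖ := norm_pos_iff.2 (sub_ne_zero.2 hxy)
  have h1 : ‖‖x‖⁻¹ • x - ‖y‖⁻¹ • y‖ * ‖x‖ ≤ 2 * ‖x - y‖ := aux_norm x y hx hy
  have h2 : ‖‖x‖⁻¹ • x - ‖y‖⁻¹ • y‖ * ‖y‖ ≤ 2 * ‖x - y‖ := by
    have := aux_norm y x hy hx
    rwa [norm_sub_rev y x, norm_sub_rev (‖y‖⁻¹ • y)] at this
  rw [div_mul_eq_mul_div, div_le_iff₀ hd0]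
  nlinarith [norm_nonneg (‖x‖⁻¹ • x - ‖y‖⁻¹ • y)]

lemma key_ineq {α β L t ε : ℝ} (hα : 0 < α) (hβ : 0 < β) (hL1 : 1 ≤ L) (hL2 : L ≤ 2)
    (ht0 : 0 < t) (ht4 : t ≤ 1/4) (htep : 10 * (α + β) * t ≤ -ε) :
    ((α+β)*L + ε) * (1+t) < (α*(1-t^2-t)+β*(1-t^2)) * (L-2*t^2-t) := by
  nlinarith [mul_pos (add_pos hα hβ) ht0, sq_nonneg t, mul_pos ht0 ht0,
    mul_nonneg (mul_pos (add_pos hα hβ) ht0).le ht0.le,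
    mul_nonneg (mul_nonneg (mul_pos (add_pos hα hβ) ht0).le ht0.le) ht0.le,
    mul_pos hα ht0, mul_pos hβ ht0]

set_option maxHeartbeats 2000000

theorem DW_ge_liminf (X : Type*) [NormedAddCommGroup X] [NormedSpace ℝ X] [CompleteSpace X]
    (f g : ℕ → StrongDual ℝ X) (x : ℕ → X)
    (hf : ∀ n, ‖f n‖ ≤ 1) (hg : ∀ n, ‖g n‖ ≤ 1) (hx : ∀ n, ‖x n‖ ≤ 1)
    (hlim : Tendsto (fun n => f n (x n)) atTop (nhds 1))
    (hpos : 0 < liminf (fun n => g n (x n)) atTop)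
    (α β : ℝ) (hα : 0 < α) (hβ : 0 < β) :
    (α + β) * max (liminf (fun n => ‖g n (x n) • f n - g n‖) atTop) 1 ≤ DW X α β := by
  classical
  set S : Set ℝ := { r : ℝ | ∃ x y : X, x ≠ 0 ∧ y ≠ 0 ∧ x ≠ y ∧
    r = (α * ‖x‖ + β * ‖y‖) / ‖x - y‖ * ‖‖x‖⁻¹ • x - ‖y‖⁻¹ • y‖ } with hSdef
  have hbdd : BddAbove S := ⟨2 * (α + β), fun r hr => DW_set_bdd hα.le hβ.le r hr⟩
  -- a nonzero point
  obtain ⟨n₀, hn₀⟩ : ∃ n, (1:ℝ)/2 < f n (x n) := (hlim.eventually (eventually_gt_nhds (by norm_num))).exists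
  have hxn₀ : x n₀ ≠ 0 := by
    intro h; rw [h] at hn₀; simp at hn₀; linarith
  have hA : (0:ℝ) < ‖x n₀‖ := norm_pos_iff.2 hxn₀
  -- α + β belongs to S
  have hmem : (α + β) ∈ S := by
    refine ⟨x n₀, -(x n₀), hxn₀, neg_ne_zero.2 hxn₀, ?_, ?_⟩
    · intro h
      apply hxn₀
      have h2 : (2:ℝ) • x n₀ = 0 := by
        rw [two_smul]; nth_rewrite 2 [h]; simp
      simpa using (smul_eq_zero.1 h2).resolve_left (by norm_num)
    · have e1 : x n₀ - -(x n₀) = (2:ℝ) • x n₀ := by module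
      have e2 : ‖x n₀‖⁻¹ • x n₀ - ‖x n₀‖⁻¹ • (-(x n₀)) = (2 * ‖x n₀‖⁻¹) • x n₀ := by module
      rw [norm_neg, e1, e2, norm_smul, norm_smul, Real.norm_eq_abs, Real.norm_eq_abs,
        abs_of_pos (by positivity : (0:ℝ) < 2 * ‖x n₀‖⁻¹), abs_of_pos (by norm_num : (0:ℝ) < 2)]
      field_simp
  have hne : S.Nonempty := ⟨_, hmem⟩
  rcases le_total (liminf (fun n => ‖g n (x n) • f n - g n‖) atTop) 1 with hL1 | hL1
  · rw [max_eq_right hL1, mul_one]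
    exact le_csSup hbdd hmem
  · rw [max_eq_left hL1]
    set L := liminf (fun n => ‖g n (x n) • f n - g n‖) atTop with hLdef
    have hL2 : L ≤ 2 := by
      refine liminf_le_of_frequently_le (Frequently.of_forall fun n => ?_)
        (isBoundedUnder_of ⟨0, fun n => norm_nonneg _⟩)
      calc ‖g n (x n) • f n - g n‖ ≤ ‖g n (x n) • f n‖ + ‖g n‖ := norm_sub_le _ _
        _ ≤ 1 * 1 + 1 := by
            refine add_le_add ?_ (hg n)
            rw [norm_smul, Real.norm_eq_abs]
            refine mul_le_mul ?_ (hf n) (norm_nonneg _) (by norm_num)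
            calc |g n (x n)| = ‖g n (x n)‖ := rfl
              _ ≤ ‖g n‖ * ‖x n‖ := (g n).le_opNorm _
              _ ≤ 1 * 1 := mul_le_mul (hg n) (hx n) (norm_nonneg _) (by norm_num)
              _ = 1 := by norm_num
        _ = 2 := by norm_num
    rw [DW, ← hSdef, Real.le_sSup_iff hbdd hne]
    intro ε hε
    set lam0 := liminf (fun n => g n (x n)) atTop with hl0
    -- choose t and δ
    obtain ⟨t, ht0, htep, htlam, ht4⟩ :
        ∃ t : ℝ, 0 < t ∧ 10 * (α + β) * t ≤ -ε ∧ t ≤ lam0 / 4 ∧ t ≤ 1/4 := by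
      refine ⟨min (-ε / (10 * (α + β))) (min (lam0 / 4) (1/4)), ?_, ?_, ?_, ?_⟩
      · exact lt_min (div_pos (by linarith) (by positivity))
          (lt_min (by positivity) (by norm_num))
      · have h1 : min (-ε / (10 * (α + β))) (min (lam0 / 4) (1/4)) ≤ -ε / (10 * (α + β)) :=
          min_le_left _ _
        rw [le_div_iff₀ (by positivity)] at h1; linarith
      · exact le_trans (min_le_right _ _) (min_le_left _ _)
      · exact le_trans (min_le_right _ _) (min_le_right _ _)

    set δ : ℝ := t^2 with hdel
    have hδ0 : 0 < δ := by positivity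
    have hδ16 : δ ≤ 1/16 := by nlinarith
    have hgx_abs : ∀ m, |g m (x m)| ≤ 1 := fun m => by
      calc |g m (x m)| = ‖g m (x m)‖ := rfl
        _ ≤ ‖g m‖ * ‖x m‖ := (g m).le_opNorm _
        _ ≤ 1 * 1 := mul_le_mul (hg m) (hx m) (norm_nonneg _) (by norm_num)
        _ = 1 := by norm_num
    have hev1 : ∀ᶠ m in atTop, lam0 / 2 < g m (x m) :=
      eventually_lt_of_lt_liminf (by linarith)
        (isBoundedUnder_of ⟨-1, fun m => by
          have := (abs_le.1 (hgx_abs m)).1; simpa using this⟩)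
    have hev2 : ∀ᶠ m in atTop, 1 - δ < f m (x m) :=
      hlim.eventually (eventually_gt_nhds (by linarith))
    have hev3 : ∀ᶠ m in atTop, L - δ < ‖g m (x m) • f m - g m‖ :=
      eventually_lt_of_lt_liminf (by linarith)
        (isBoundedUnder_of ⟨0, fun m => norm_nonneg _⟩)
    obtain ⟨n, hn1, hn2, hn3⟩ := (hev1.and (hev2.and hev3)).exists
    set lam := g n (x n) with hlamdef
    have hlam_pos : 0 < lam := lt_trans (by linarith) hn1
    have hlam1 : lam ≤ 1 := (le_abs_self _).trans (hgx_abs n)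
    set b := ‖x n‖ with hbdef
    have hb1 : b ≤ 1 := hx n
    have hfb : f n (x n) ≤ b := by
      calc f n (x n) ≤ |f n (x n)| := le_abs_self _
        _ = ‖f n (x n)‖ := rfl
        _ ≤ ‖f n‖ * ‖x n‖ := (f n).le_opNorm _
        _ ≤ 1 * b := mul_le_mul_of_nonneg_right (hf n) (norm_nonneg _)
        _ = b := one_mul b
    have hb0 : 0 < b := lt_of_lt_of_le (by linarith) hfb
    have hxn0 : x n ≠ 0 := norm_pos_iff.1 hb0
    have hM : L - δ < ‖lam • f n - g n‖ := hn3
    have hLδ : 0 < L - 2*δ := by linarith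
    obtain ⟨z₀, hz₀1, hz₀2⟩ :=
      (lam • f n - g n).exists_lt_apply_of_lt_opNorm (show L - 2*δ < ‖lam • f n - g n‖ by linarith)
    have happ : ∀ w : X, (lam • f n - g n) w = lam * f n w - g n w := fun w => by
      simp [ContinuousLinearMap.sub_apply, ContinuousLinearMap.smul_apply, smul_eq_mul]
    obtain ⟨z, hz1, hTz⟩ : ∃ z : X, ‖z‖ ≤ 1 ∧ L - 2*δ < lam * f n z - g n z := by
      rw [Real.norm_eq_abs] at hz₀2
      rcases lt_abs.1 hz₀2 with h | h
      · exact ⟨z₀, hz₀1.le, by rw [← happ]; exact h⟩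
      · refine ⟨-z₀, by rw [norm_neg]; exact hz₀1.le, ?_⟩
        rw [← happ, map_neg]; linarith
    have hz0 : z ≠ 0 := by
      intro h; rw [h] at hTz; simp at hTz; linarith
    have hFabs : |f n z| ≤ 1 := by
      calc |f n z| = ‖f n z‖ := rfl
        _ ≤ ‖f n‖ * ‖z‖ := (f n).le_opNorm _
        _ ≤ 1 * 1 := mul_le_mul (hf n) hz1 (norm_nonneg _) (by norm_num)
        _ = 1 := by norm_num
    have hGabs : |g n z| ≤ 1 := by
      calc |g n z| = ‖g n z‖ := rfl
        _ ≤ ‖g n‖ * ‖z‖ := (g n).le_opNorm _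
        _ ≤ 1 * 1 := mul_le_mul (hg n) hz1 (norm_nonneg _) (by norm_num)
        _ = 1 := by norm_num
    set F := f n z with hFdef
    set G := g n z with hGdef
    have hFm : -1 ≤ F := (abs_le.1 hFabs).1
    have hFp : F ≤ 1 := (abs_le.1 hFabs).2
    have hGm : -1 ≤ G := (abs_le.1 hGabs).1
    set u := x n + t • z with hudef
    set a := ‖u‖ with hadef
    have hfu : f n u = f n (x n) + t * F := by
      rw [hudef]; rw [map_add, map_smul, smul_eq_mul]
    have hgu : g n u = lam + t * G := by
      rw [hudef]; rw [map_add, map_smul, smul_eq_mul]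
    have hfua : f n u ≤ a := by
      calc f n u ≤ |f n u| := le_abs_self _
        _ = ‖f n u‖ := rfl
        _ ≤ ‖f n‖ * ‖u‖ := (f n).le_opNorm _
        _ ≤ 1 * a := mul_le_mul_of_nonneg_right (hf n) (norm_nonneg _)
        _ = a := one_mul a
    have ha_low : 1 - δ + t * F < a := by
      rw [hfu] at hfua; linarith
    have ha_up : a ≤ 1 + t := by
      calc a ≤ ‖x n‖ + ‖t • z‖ := norm_add_le _ _
        _ = b + t * ‖z‖ := by rw [norm_smul, Real.norm_eq_abs, abs_of_pos ht0]
        _ ≤ 1 + t * 1 := add_le_add hb1 (mul_le_mul_of_nonneg_left hz1 ht0.le)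
        _ = 1 + t := by ring
    have htF : t * (-1) ≤ t * F := mul_le_mul_of_nonneg_left hFm ht0.le
    have htF2 : t * F ≤ t * 1 := mul_le_mul_of_nonneg_left hFp ht0.le
    have ha0 : 0 < a := by linarith
    set d : ℝ := 1 - δ + t * F with hddef
    have hd0 : 0 < d := by rw [hddef]; linarith
    have hd_up : d ≤ 1 + t := by rw [hddef]; linarith
    have hu0 : u ≠ 0 := norm_pos_iff.1 ha0
    have hsub : u - x n = t • z := by rw [hudef]; abel
    have hs_eq : ‖u - x n‖ = t * ‖z‖ := by
      rw [hsub, norm_smul, Real.norm_eq_abs, abs_of_pos ht0]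
    have hs0 : 0 < ‖u - x n‖ := by
      rw [hs_eq]; exact mul_pos ht0 (norm_pos_iff.2 hz0)
    have hs_le : ‖u - x n‖ ≤ t := by
      rw [hs_eq]
      calc t * ‖z‖ ≤ t * 1 := mul_le_mul_of_nonneg_left hz1 ht0.le
        _ = t := mul_one t
    have hune : u ≠ x n := fun h => by rw [h] at hs0; simp at hs0
    set W := ‖a⁻¹ • u - b⁻¹ • x n‖ with hWdef
    have hWg : lam * b⁻¹ - (lam + t*G) * a⁻¹ ≤ W := by
      have h1 : g n (b⁻¹ • x n - a⁻¹ • u) = lam * b⁻¹ - (lam + t*G) * a⁻¹ := by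
        rw [map_sub, map_smul, map_smul, hgu, smul_eq_mul, smul_eq_mul, ← hlamdef]; ring
      calc lam * b⁻¹ - (lam + t*G) * a⁻¹ = g n (b⁻¹ • x n - a⁻¹ • u) := h1.symm
        _ ≤ |g n (b⁻¹ • x n - a⁻¹ • u)| := le_abs_self _
        _ = ‖g n (b⁻¹ • x n - a⁻¹ • u)‖ := rfl
        _ ≤ ‖g n‖ * ‖b⁻¹ • x n - a⁻¹ • u‖ := (g n).le_opNorm _
        _ ≤ 1 * ‖b⁻¹ • x n - a⁻¹ • u‖ := mul_le_mul_of_nonneg_right (hg n) (norm_nonneg _)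
        _ = W := by rw [one_mul, norm_sub_rev]
    have hQ1 : lam ≤ lam * b⁻¹ := by
      rw [← div_eq_mul_inv, le_div_iff₀ hb0]
      have : lam * b ≤ lam * 1 := mul_le_mul_of_nonneg_left hb1 hlam_pos.le
      linarith
    have htG : t * (-1) ≤ t * G := mul_le_mul_of_nonneg_left hGm ht0.le
    have hlamtG : 0 < lam + t * G := by linarith
    have hQ2 : (lam + t*G) * a⁻¹ ≤ (lam + t*G) / d := by
      rw [← div_eq_mul_inv]
      exact div_le_div_of_nonneg_left hlamtG.le hd0 ha_low.le
    have hnum : 0 < t * (L - 2*δ) - δ := by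
      have h1 : t * (7/8) ≤ t * (L - 2*δ) :=
        mul_le_mul_of_nonneg_left (by linarith) ht0.le
      have h2 : δ ≤ t * (1/4) := by
        rw [hdel, sq]; exact mul_le_mul_of_nonneg_left ht4 ht0.le
      linarith
    have hQ3 : (t*(L-2*δ) - δ)/(1+t) ≤ lam - (lam + t*G)/d := by
      have e : lam - (lam + t*G)/d = (t*(lam*F - G) - lam*δ)/d := by
        field_simp; ring
      rw [e]
      have h1 : t * (L - 2*δ) ≤ t * (lam*F - G) :=
        mul_le_mul_of_nonneg_left hTz.le ht0.le
      have h2 : lam * δ ≤ 1 * δ := mul_le_mul_of_nonneg_right hlam1 hδ0.le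
      apply div_le_div₀ (by linarith) (by linarith) hd0 hd_up
    have hW_low : (t*(L-2*δ) - δ)/(1+t) ≤ W := by
      have h2 : lam - (lam + t*G)/d ≤ lam * b⁻¹ - (lam + t*G)*a⁻¹ := by linarith
      linarith
    refine ⟨(α * a + β * b) / ‖u - x n‖ * W, ⟨u, x n, hu0, hxn0, hune, rfl⟩, ?_⟩
    have hstep1 : (α*(1-δ-t) + β*(1-δ)) / t * ((t*(L-2*δ) - δ)/(1+t))
        ≤ (α * a + β * b) / ‖u - x n‖ * W := by
      have hf1 : (α*(1-δ-t) + β*(1-δ)) / t ≤ (α * a + β * b) / ‖u - x n‖ := by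
        have h1 : α * (1-δ-t) ≤ α * a := mul_le_mul_of_nonneg_left (by linarith) hα.le
        have h2 : β * (1-δ) ≤ β * b := mul_le_mul_of_nonneg_left (by linarith) hβ.le
        apply div_le_div₀ (by positivity) (by linarith) hs0 hs_le
      have hf2 : (0:ℝ) ≤ (t*(L-2*δ) - δ)/(1+t) := by positivity
      have hf3 : (0:ℝ) ≤ (α * a + β * b) / ‖u - x n‖ := by positivity
      exact mul_le_mul hf1 hW_low hf2 hf3
    have key2 : ((α+β)*L + ε) * (1+t) < (α*(1-δ-t)+β*(1-δ)) * (L-2*δ-t) := by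
      rw [hdel]; exact key_ineq hα hβ hL1 hL2 ht0 ht4 htep
    have key3 : (α+β)*L + ε < (α*(1-δ-t)+β*(1-δ)) / t * ((t*(L-2*δ) - δ)/(1+t)) := by
      rw [div_mul_div_comm, lt_div_iff₀ (by positivity)]
      have expand : (α*(1-δ-t)+β*(1-δ)) * (t*(L-2*δ) - δ)
          = ((α*(1-δ-t)+β*(1-δ)) * (L-2*δ-t)) * t := by rw [hdel]; ring
      rw [expand]
      calc ((α+β)*L + ε) * (t*(1+t)) = (((α+β)*L + ε) * (1+t)) * t := by ring
        _ < ((α*(1-δ-t)+β*(1-δ)) * (L-2*δ-t)) * t := by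
            exact mul_lt_mul_of_pos_right key2 ht0
    linarith
end

section
/- For any nonzero x, y in a real normed space X with x ≠ y, and α, β > 0, one has (α‖x‖+β‖y‖)/‖x−y‖ · ‖x/‖x‖ − y/‖y‖‖ ≤ (α+β) + (α+β)·|‖x‖−‖y‖|/‖x−y‖. -/
lemma key_norm_bound {X : Type*} [NormedAddCommGroup X] [NormedSpace ℝ X]
    (x y : X) (hx : x ≠ 0) (hy : y ≠ 0) :
    ‖x‖ * ‖‖x‖⁻¹ • x - ‖y‖⁻¹ • y‖ ≤ ‖x - y‖ + |‖x‖ - ‖y‖| := by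
  have hxn : ‖x‖ ≠ 0 := norm_ne_zero_iff.mpr hx
  have hyn : ‖y‖ ≠ 0 := norm_ne_zero_iff.mpr hy
  have h1 : ‖x‖ * ‖‖x‖⁻¹ • x - ‖y‖⁻¹ • y‖ = ‖x - (‖x‖ / ‖y‖) • y‖ := by
    rw [← norm_smul_of_nonneg (norm_nonneg x), smul_sub, smul_smul, smul_smul,
      mul_inv_cancel₀ hxn, one_smul, div_eq_mul_inv]
  rw [h1]
  have h2 : x - (‖x‖ / ‖y‖) • y = (x - y) + (1 - ‖x‖ / ‖y‖) • y := by
    rw [sub_smul, one_smul]; abel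
  rw [h2]
  calc ‖(x - y) + (1 - ‖x‖ / ‖y‖) • y‖ ≤ ‖x - y‖ + ‖(1 - ‖x‖ / ‖y‖) • y‖ := norm_add_le _ _
    _ = ‖x - y‖ + |‖x‖ - ‖y‖| := by
        rw [norm_smul, Real.norm_eq_abs]
        congr 1
        rw [show (1 : ℝ) - ‖x‖ / ‖y‖ = (‖y‖ - ‖x‖) / ‖y‖ by field_simp,
          abs_div, abs_of_nonneg (norm_nonneg y), div_mul_cancel₀ _ hyn, abs_sub_comm]

theorem angular_distance_bound {X : Type*} [NormedAddCommGroup X] [NormedSpace ℝ X]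
    (x y : X) (hx : x ≠ 0) (hy : y ≠ 0) (hxy : x ≠ y) (α β : ℝ) (hα : 0 < α) (hβ : 0 < β) :
    (α * ‖x‖ + β * ‖y‖) / ‖x - y‖ * ‖‖x‖⁻¹ • x - ‖y‖⁻¹ • y‖ ≤
      (α + β) + (α + β) * |‖x‖ - ‖y‖| / ‖x - y‖ := by
  have hd : (0:ℝ) < ‖x - y‖ := by
    rw [norm_pos_iff, sub_ne_zero]; exact hxy
  have h1 := key_norm_bound x y hx hy
  have h2 := key_norm_bound y x hy hx
  rw [norm_sub_rev, norm_sub_rev y x, abs_sub_comm] at h2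
  have key : (α * ‖x‖ + β * ‖y‖) * ‖‖x‖⁻¹ • x - ‖y‖⁻¹ • y‖ ≤
      (α + β) * (‖x - y‖ + |‖x‖ - ‖y‖|) := by nlinarith
  calc (α * ‖x‖ + β * ‖y‖) / ‖x - y‖ * ‖‖x‖⁻¹ • x - ‖y‖⁻¹ • y‖
      = (α * ‖x‖ + β * ‖y‖) * ‖‖x‖⁻¹ • x - ‖y‖⁻¹ • y‖ / ‖x - y‖ := by ring
    _ ≤ (α + β) * (‖x - y‖ + |‖x‖ - ‖y‖|) / ‖x - y‖ :=
        by gcongr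
    _ = (α + β) + (α + β) * |‖x‖ - ‖y‖| / ‖x - y‖ := by field_simp
end

section
/- In any real Banach space X with α, β > 0, DW(X,α,β) ≥ (α+β)·max{2ρ'_X(0), 1}, where ρ'_X(0) is the characteristic of smoothness of X. -/
noncomputable def modulusSmoothness (X : Type*) [NormedAddCommGroup X] [NormedSpace ℝ X]
    (t : ℝ) : ℝ :=
  sSup { r : ℝ | ∃ x y : X, ‖x‖ ≤ 1 ∧ ‖y‖ ≤ 1 ∧
    r = (‖x + t • y‖ + ‖x - t • y‖) / 2 - 1 }

section Aux

variable {X : Type*} [NormedAddCommGroup X] [NormedSpace ℝ X]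

/-- Every element of the DW set is at most `2 * (α + β)`. -/
lemma DW_mem_le {α β : ℝ} (hα : 0 ≤ α) (hβ : 0 ≤ β) {r : ℝ}
    (hr : r ∈ { r : ℝ | ∃ x y : X, x ≠ 0 ∧ y ≠ 0 ∧ x ≠ y ∧
      r = (α * ‖x‖ + β * ‖y‖) / ‖x - y‖ * ‖‖x‖⁻¹ • x - ‖y‖⁻¹ • y‖ }) :
    r ≤ 2 * (α + β) := by
  obtain ⟨x, y, hx, hy, hxy, rfl⟩ := hr
  have hxn : (0:ℝ) < ‖x‖ := norm_pos_iff.mpr hx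
  have hyn : (0:ℝ) < ‖y‖ := norm_pos_iff.mpr hy
  have hD : (0:ℝ) < ‖x - y‖ := by
    rw [norm_pos_iff, sub_ne_zero]; exact hxy
  have key : ∀ a b : X, a ≠ 0 → b ≠ 0 →
      ‖a‖ * ‖‖a‖⁻¹ • a - ‖b‖⁻¹ • b‖ ≤ 2 * ‖a - b‖ := by
    intro a b ha hb
    have han : (0:ℝ) < ‖a‖ := norm_pos_iff.mpr ha
    have hbn : (0:ℝ) < ‖b‖ := norm_pos_iff.mpr hb
    have h1 : ‖a‖ * ‖‖a‖⁻¹ • a - ‖b‖⁻¹ • b‖ = ‖a - (‖a‖ * ‖b‖⁻¹) • b‖ := by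
      rw [← norm_smul_of_nonneg han.le, smul_sub, smul_smul, smul_smul,
        mul_inv_cancel₀ han.ne', one_smul]
    have h2 : a - (‖a‖ * ‖b‖⁻¹) • b = (a - b) + (1 - ‖a‖ * ‖b‖⁻¹) • b := by
      module
    have h3 : ‖(1 - ‖a‖ * ‖b‖⁻¹) • b‖ = |‖b‖ - ‖a‖| := by
      rw [norm_smul, Real.norm_eq_abs]
      rw [← abs_of_pos hbn, ← abs_mul]
      congr 1
      field_simp
      rw [abs_of_pos hbn]; ring
    have h4 : |‖b‖ - ‖a‖| ≤ ‖a - b‖ := by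
      rw [norm_sub_rev]; exact abs_norm_sub_norm_le b a
    calc ‖a‖ * ‖‖a‖⁻¹ • a - ‖b‖⁻¹ • b‖ = ‖(a - b) + (1 - ‖a‖ * ‖b‖⁻¹) • b‖ := by
          rw [h1, h2]
      _ ≤ ‖a - b‖ + ‖(1 - ‖a‖ * ‖b‖⁻¹) • b‖ := norm_add_le _ _
      _ ≤ 2 * ‖a - b‖ := by rw [h3]; linarith
  have k1 := key x y hx hy
  have k2 := key y x hy hx
  rw [norm_sub_rev y x] at k2
  have k2' : ‖y‖ * ‖‖x‖⁻¹ • x - ‖y‖⁻¹ • y‖ ≤ 2 * ‖x - y‖ := by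
    rwa [norm_sub_rev (‖y‖⁻¹ • y)] at k2
  have hN0 : (0:ℝ) ≤ ‖‖x‖⁻¹ • x - ‖y‖⁻¹ • y‖ := norm_nonneg _
  rw [div_mul_eq_mul_div, div_le_iff₀ hD]
  calc (α * ‖x‖ + β * ‖y‖) * ‖‖x‖⁻¹ • x - ‖y‖⁻¹ • y‖
      = α * (‖x‖ * ‖‖x‖⁻¹ • x - ‖y‖⁻¹ • y‖) + β * (‖y‖ * ‖‖x‖⁻¹ • x - ‖y‖⁻¹ • y‖) := by
        ring
    _ ≤ α * (2 * ‖x - y‖) + β * (2 * ‖x - y‖) :=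
        add_le_add (mul_le_mul_of_nonneg_left k1 hα) (mul_le_mul_of_nonneg_left k2' hβ)
    _ = 2 * (α + β) * ‖x - y‖ := by ring

end Aux

set_option maxHeartbeats 1000000 in
theorem DW_ge_charSmoothness (X : Type*) [NormedAddCommGroup X] [NormedSpace ℝ X]
    [CompleteSpace X] (α β : ℝ) (hα : 0 < α) (hβ : 0 < β) (ρ'₀ : ℝ)
    (hρ : Filter.Tendsto (fun t => modulusSmoothness X t / t)
      (nhdsWithin 0 (Set.Ioi 0)) (nhds ρ'₀)) :
    (α + β) * max (2 * ρ'₀) 1 ≤ DW X α β := by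
  classical
  -- X is nontrivial
  have hX : Nontrivial X := by
    rcases subsingleton_or_nontrivial X with hs | h
    · exfalso
      have hmod : ∀ t : ℝ, modulusSmoothness X t = -1 := by
        intro t
        have hset : { r : ℝ | ∃ x y : X, ‖x‖ ≤ 1 ∧ ‖y‖ ≤ 1 ∧
            r = (‖x + t • y‖ + ‖x - t • y‖) / 2 - 1 } = {(-1 : ℝ)} := by
          ext r
          simp only [Set.mem_setOf_eq, Set.mem_singleton_iff]
          constructor
          · rintro ⟨x, y, -, -, rfl⟩
            have hx : x = 0 := Subsingleton.elim _ _
            have hy : y = 0 := Subsingleton.elim _ _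
            subst hx; subst hy; simp
          · rintro rfl
            exact ⟨0, 0, by simp, by simp, by simp⟩
        rw [modulusSmoothness, hset, csSup_singleton]
      have h1 : Filter.Tendsto (fun t : ℝ => -1 / t)
          (nhdsWithin 0 (Set.Ioi 0)) (nhds ρ'₀) :=
        hρ.congr fun t => by rw [hmod t]
      have h2 : Filter.Tendsto (fun t : ℝ => -1 / t)
          (nhdsWithin 0 (Set.Ioi 0)) Filter.atBot := by
        have h3 := Filter.Tendsto.comp Filter.tendsto_neg_atTop_atBot
          (tendsto_inv_nhdsGT_zero (𝕜 := ℝ))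
        refine h3.congr fun t => ?_
        simp [Function.comp, div_eq_mul_inv]
      exact not_tendsto_nhds_of_tendsto_atBot h2 ρ'₀ h1
    · exact h
  obtain ⟨x₀, hx₀⟩ := exists_ne (0 : X)
  set S : Set ℝ := { r : ℝ | ∃ x y : X, x ≠ 0 ∧ y ≠ 0 ∧ x ≠ y ∧
    r = (α * ‖x‖ + β * ‖y‖) / ‖x - y‖ * ‖‖x‖⁻¹ • x - ‖y‖⁻¹ • y‖ } with hSdef
  have hDW : DW X α β = sSup S := rfl
  have hbdd : BddAbove S := ⟨2 * (α + β), fun r hr => DW_mem_le hα.le hβ.le hr⟩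
  have hxn₀ : (0:ℝ) < ‖x₀‖ := norm_pos_iff.mpr hx₀
  have hmem0 : (α + β) ∈ S := by
    refine ⟨x₀, -x₀, hx₀, neg_ne_zero.mpr hx₀, ?_, ?_⟩
    · intro h
      apply hx₀
      have h2 : x₀ + x₀ = 0 := by rw [← sub_neg_eq_add, ← h]; simp
      have h3 : (2:ℝ) • x₀ = 0 := by rw [two_smul]; exact h2
      simpa using h3
    · have e1 : x₀ - -x₀ = (2:ℝ) • x₀ := by module
      have e2 : ‖x₀‖⁻¹ • x₀ - ‖-x₀‖⁻¹ • (-x₀) = (2 * ‖x₀‖⁻¹) • x₀ := by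
        rw [norm_neg]; module
      rw [e2, e1, norm_neg, norm_smul, norm_smul, Real.norm_eq_abs, Real.norm_eq_abs,
        abs_of_pos (by norm_num : (0:ℝ) < 2), abs_of_pos (by positivity)]
      field_simp
  have hab : α + β ≤ DW X α β := by
    rw [hDW]; exact le_csSup hbdd hmem0
  -- ρ'₀ ≤ 1
  have hρ1 : ρ'₀ ≤ 1 := by
    refine le_of_tendsto hρ ?_
    filter_upwards [self_mem_nhdsWithin] with t ht
    have ht0 : (0:ℝ) < t := ht
    have hmodle : modulusSmoothness X t ≤ t := by
      apply Real.sSup_le _ ht0.le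
      rintro r ⟨x, y, hx1, hy1, rfl⟩
      have hty : ‖t • y‖ ≤ t := by
        rw [norm_smul, Real.norm_eq_abs, abs_of_pos ht0]
        calc t * ‖y‖ ≤ t * 1 := mul_le_mul_of_nonneg_left hy1 ht0.le
          _ = t := mul_one t
      have h1 : ‖x + t • y‖ ≤ 1 + t := le_trans (norm_add_le _ _) (by linarith)
      have h2 : ‖x - t • y‖ ≤ 1 + t := le_trans (norm_sub_le _ _) (by linarith)
      linarith
    exact div_le_one_of_le₀ hmodle ht0.le
  rcases le_or_gt (2 * ρ'₀) 1 with hcase | hcase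
  · rw [max_eq_right hcase, mul_one]; exact hab
  rw [max_eq_left hcase.le]
  have hαβ : (0:ℝ) < α + β := by linarith
  refine le_of_forall_pos_le_add fun η hη => ?_
  set δ : ℝ := min ((2 * ρ'₀ - 1) / 4) (η / (8 * (α + β))) with hδdef
  have hδ : 0 < δ := lt_min (by linarith) (by positivity)
  set t₀ : ℝ := min (1/2) (η / (8 * (α + β) + 1)) with ht₀def
  have ht₀ : 0 < t₀ := lt_min (by norm_num) (by positivity)
  have hev1 : ∀ᶠ t in nhdsWithin 0 (Set.Ioi 0),
      |modulusSmoothness X t / t - ρ'₀| < δ := by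
    have := Metric.tendsto_nhds.mp hρ δ hδ
    simpa [Real.dist_eq] using this
  have hev2 : ∀ᶠ t in nhdsWithin 0 (Set.Ioi 0), t ∈ Set.Ioo (0:ℝ) t₀ :=
    Filter.eventually_of_mem (Ioo_mem_nhdsGT_of_mem ⟨le_refl 0, ht₀⟩) fun x hx => hx
  obtain ⟨t, htδ, ht0, htt₀⟩ :
      ∃ t : ℝ, |modulusSmoothness X t / t - ρ'₀| < δ ∧ 0 < t ∧ t < t₀ := by
    obtain ⟨t, h1, h2⟩ := (hev1.and hev2).exists
    exact ⟨t, h1, h2.1, h2.2⟩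
  have ht12 : t < 1/2 := lt_of_lt_of_le htt₀ (min_le_left _ _)
  have htη : t < η / (8 * (α + β) + 1) := lt_of_lt_of_le htt₀ (min_le_right _ _)
  set ε : ℝ := 2 * ρ'₀ - 4 * δ with hεdef
  have hε1 : 1 ≤ ε := by
    have := min_le_left ((2 * ρ'₀ - 1) / 4) (η / (8 * (α + β)))
    rw [← hδdef] at this
    simp only [hεdef]; linarith
  have hε2 : ε ≤ 2 := by simp only [hεdef]; linarith
  -- get a near-optimal pair for the modulus of smoothness
  set T : Set ℝ := { r : ℝ | ∃ x y : X, ‖x‖ ≤ 1 ∧ ‖y‖ ≤ 1 ∧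
    r = (‖x + t • y‖ + ‖x - t • y‖) / 2 - 1 } with hTdef
  have hT : modulusSmoothness X t = sSup T := rfl
  have hTne : T.Nonempty :=
    ⟨(‖(0:X) + t • (0:X)‖ + ‖(0:X) - t • (0:X)‖) / 2 - 1, 0, 0, by simp, by simp, rfl⟩
  have hmodgt : (ρ'₀ - 2 * δ) * t < sSup T := by
    rw [← hT]
    have h1 : ρ'₀ - δ < modulusSmoothness X t / t := by
      have := (abs_lt.mp htδ).1
      linarith
    have h2 : (ρ'₀ - δ) * t < modulusSmoothness X t := by
      rw [← lt_div_iff₀ ht0]; exact h1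
    linarith [mul_pos hδ ht0]
  obtain ⟨r₂, ⟨x, y, hx1, hy1, hr₂⟩, hr₂gt⟩ := exists_lt_of_lt_csSup hTne hmodgt
  set A : ℝ := ‖x + t • y‖ with hAdef
  set B : ℝ := ‖x - t • y‖ with hBdef
  have hABlb : 2 + ε * t < A + B := by
    have : (ρ'₀ - 2 * δ) * t < (A + B) / 2 - 1 := by rw [← hr₂]; exact hr₂gt
    simp only [hεdef]; linarith
  have hty : ‖t • y‖ ≤ t := by
    rw [norm_smul, Real.norm_eq_abs, abs_of_pos ht0]
    calc t * ‖y‖ ≤ t * 1 := mul_le_mul_of_nonneg_left hy1 ht0.le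
      _ = t := mul_one t
  have hAub : A ≤ 1 + t := le_trans (norm_add_le _ _) (by linarith)
  have hBub : B ≤ 1 + t := le_trans (norm_sub_le _ _) (by linarith)
  have hA1 : 1 ≤ A := by
    have h9 : 0 ≤ (ε - 1) * t := mul_nonneg (by linarith) ht0.le
    linarith [h9]
  have hA0 : (0:ℝ) < A := by linarith
  have hxA : A ≤ ‖x‖ + t := by
    calc A ≤ ‖x‖ + ‖t • y‖ := norm_add_le _ _
      _ ≤ ‖x‖ + t := by linarith
  have hxlb : 1 - t ≤ ‖x‖ := by linarith
  have hxpos : (0:ℝ) < ‖x‖ := by linarith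
  have hx0 : x ≠ 0 := norm_pos_iff.mp hxpos
  have hA2x : A ≤ 2 * ‖x‖ := by linarith
  have hy0 : y ≠ 0 := by
    intro h
    have e : x + t • y = x := by rw [h, smul_zero, add_zero]
    have e' : x - t • y = x := by rw [h, smul_zero, sub_zero]
    rw [hAdef, hBdef, e, e'] at hABlb
    linarith [mul_pos (show (0:ℝ) < ε by linarith) ht0, hx1]
  have hyn : (0:ℝ) < ‖y‖ := norm_pos_iff.mpr hy0
  have hu0 : x + t • y ≠ 0 := by
    intro h
    rw [hAdef, h, norm_zero] at hA0
    exact lt_irrefl 0 hA0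
  have hux : x + t • y ≠ x := by
    intro h
    have h2 : t • y = 0 := by
      have := sub_eq_zero.mpr h
      rwa [add_sub_cancel_left] at this
    rcases smul_eq_zero.mp h2 with h3 | h3
    · exact ht0.ne' h3
    · exact hy0 h3
  -- key estimate on the normalized difference
  set N : ℝ := ‖A⁻¹ • (x + t • y) - ‖x‖⁻¹ • x‖ with hNdef
  have hN0 : (0:ℝ) ≤ N := norm_nonneg _
  set c : ℝ := A * ‖x‖⁻¹ with hcdef
  have hc2 : c ≤ 2 := by
    rw [hcdef, ← div_eq_mul_inv, div_le_iff₀ hxpos]; linarith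
  have e1 : A⁻¹ • (x + t • y) - ‖x‖⁻¹ • x = A⁻¹ • ((x + t • y) - c • x) := by
    rw [smul_sub, smul_smul, hcdef, ← mul_assoc, inv_mul_cancel₀ hA0.ne', one_mul]
  have e2 : A * N = ‖(x + t • y) - c • x‖ := by
    rw [hNdef, e1, norm_smul, Real.norm_eq_abs, abs_of_pos (inv_pos.mpr hA0),
      ← mul_assoc, mul_inv_cancel₀ hA0.ne', one_mul]
  have e3 : -(x - t • y) = ((x + t • y) - c • x) - (2 - c) • x := by module
  have e4 : ‖(2 - c) • x‖ = (2 - c) * ‖x‖ := by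
    rw [norm_smul, Real.norm_eq_abs, abs_of_nonneg (by linarith)]
  have e5 : B - (2 - c) * ‖x‖ ≤ ‖(x + t • y) - c • x‖ := by
    have h6 : B = ‖-(x - t • y)‖ := (norm_neg _).symm
    have h7 : ‖((x + t • y) - c • x) - (2 - c) • x‖ ≤
        ‖(x + t • y) - c • x‖ + ‖(2 - c) • x‖ := norm_sub_le _ _
    rw [← e3] at h7
    rw [h6] at *
    linarith [e4, h7]
  have hcx : c * ‖x‖ = A := by
    rw [hcdef, mul_assoc, inv_mul_cancel₀ hxpos.ne', mul_one]
  have hkey : A + B - 2 * ‖x‖ ≤ A * N := by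
    rw [e2]; linarith
  have hkeyε : ε * t ≤ A * N := by
    have hx1' : ‖x‖ ≤ 1 := hx1
    linarith
  -- membership of the constructed value
  set q : ℝ := α * A + β * ‖x‖ with hqdef
  have hq : (0:ℝ) < q := by positivity
  have hDuv : ‖(x + t • y) - x‖ = t * ‖y‖ := by
    rw [add_sub_cancel_left, norm_smul, Real.norm_eq_abs, abs_of_pos ht0]
  set r₁ : ℝ := q / (t * ‖y‖) * N with hr₁def
  have hr₁mem : r₁ ∈ S := by
    refine ⟨x + t • y, x, hu0, hx0, hux, ?_⟩
    rw [hr₁def, hqdef, hNdef, hDuv, hAdef]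
  have hr₁0 : (0:ℝ) ≤ r₁ := by
    rw [hr₁def]; positivity
  have hr₁DW : r₁ ≤ DW X α β := by rw [hDW]; exact le_csSup hbdd hr₁mem
  have hr₁ub : r₁ ≤ 2 * (α + β) := DW_mem_le hα.le hβ.le hr₁mem
  have e6 : r₁ * (t * ‖y‖) = q * N := by
    rw [hr₁def]
    field_simp
  -- main chain: r₁ * A ≥ ε * q
  have s2 : ε * q ≤ r₁ * A := by
    have h' : ε * q * t ≤ r₁ * A * t := by
      have h1 : q * (ε * t) ≤ q * (A * N) := mul_le_mul_of_nonneg_left hkeyε hq.le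
      have hpos : (0:ℝ) ≤ r₁ * t * A := by positivity
      have h2 : r₁ * (t * ‖y‖) * A ≤ r₁ * t * A := by
        calc r₁ * (t * ‖y‖) * A = r₁ * t * A * ‖y‖ := by ring
          _ ≤ r₁ * t * A * 1 := mul_le_mul_of_nonneg_left hy1 hpos
          _ = r₁ * t * A := by ring
      calc ε * q * t = q * (ε * t) := by ring
        _ ≤ q * (A * N) := h1
        _ = r₁ * (t * ‖y‖) * A := by rw [e6]; ring
        _ ≤ r₁ * t * A := h2
        _ = r₁ * A * t := by ring
    exact le_of_mul_le_mul_right h' ht0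
  -- final bookkeeping
  have hδb : δ ≤ η / (8 * (α + β)) := min_le_right _ _
  have h5 : 4 * (α + β) * t ≤ η / 2 := by
    have h1 : t * (8 * (α + β) + 1) ≤ η := by
      rw [← le_div_iff₀ (by positivity : (0:ℝ) < 8 * (α + β) + 1)]
      exact htη.le
    linarith
  have h6 : 4 * δ * (α + β) ≤ η / 2 := by
    have h1 : δ * (8 * (α + β)) ≤ η := by
      rw [← le_div_iff₀ (by positivity : (0:ℝ) < 8 * (α + β))]
      exact hδb
    linarith
  have hεr : 2 * ρ'₀ = ε + 4 * δ := by rw [hεdef]; ring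
  rw [hεr]
  have hε0 : (0:ℝ) < ε := by linarith
  have s2' : ε * (α * A + β * ‖x‖) ≤ r₁ * A := by rw [hqdef] at s2; exact s2
  have i1 : ε * α * A + ε * β * (1 - t) ≤ r₁ * A := by
    have h9 := mul_le_mul_of_nonneg_left hxlb (by positivity : (0:ℝ) ≤ ε * β)
    linarith [s2', h9]
  have i2 : r₁ * A ≤ r₁ * (1 + t) := mul_le_mul_of_nonneg_left hAub hr₁0
  have i3 : ε * α ≤ ε * α * A := le_mul_of_one_le_right (by positivity) hA1
  have i4 : r₁ * t ≤ 2 * (α + β) * t := mul_le_mul_of_nonneg_right hr₁ub ht0.le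
  have i5 : ε * β * t ≤ 2 * β * t :=
    mul_le_mul_of_nonneg_right (mul_le_mul_of_nonneg_right hε2 hβ.le) ht0.le
  linarith [i1, i2, i3, i4, i5, h5, h6, hr₁DW, mul_nonneg hα.le ht0.le]
end

section
/- For a real Banach space X of dimension ≥ 2 and α, β > 0, the constant DW_B(X,α,β) satisfies α+β ≤ DW_B(X,α,β) ≤ max{2α+β, α+2β}. -/
set_option maxHeartbeats 1000000



def BirkhoffOrth {X : Type*} [NormedAddCommGroup X] [NormedSpace ℝ X] (x y : X) : Prop :=
  ∀ t : ℝ, ‖x‖ ≤ ‖x + t • y‖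

lemma key_upper {X : Type*} [NormedAddCommGroup X] [NormedSpace ℝ X]
    {α β : ℝ} (hα : 0 < α) (hβ : 0 < β) {x y : X} (hx : x ≠ 0) (hy : y ≠ 0)
    (ho : BirkhoffOrth x y) :
    (α * ‖x‖ + β * ‖y‖) / ‖x - y‖ * ‖‖x‖⁻¹ • x - ‖y‖⁻¹ • y‖ ≤ max (2 * α + β) (α + 2 * β) := by
  set a := ‖x‖ with ha'
  set b := ‖y‖ with hb'
  set s := ‖x - y‖ with hs'
  set N := ‖a⁻¹ • x - b⁻¹ • y‖ with hN'
  have ha : 0 < a := norm_pos_iff.2 hx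
  have hb : 0 < b := norm_pos_iff.2 hy
  have hsa : a ≤ s := by
    rw [hs', sub_eq_add_neg]
    simpa using ho (-1)
  have hs : 0 < s := lt_of_lt_of_le ha hsa
  have habs : |a - b| ≤ s := abs_norm_sub_norm_le x y
  have hN0 : 0 ≤ N := norm_nonneg _
  have hNa : N * a ≤ s + |a - b| := by
    have heq : a⁻¹ • x - b⁻¹ • y = a⁻¹ • (x - y) + (a⁻¹ - b⁻¹) • y := by
      module
    have h1 : N ≤ a⁻¹ * s + |a⁻¹ - b⁻¹| * b := by
      rw [hN', heq]
      refine (norm_add_le _ _).trans (le_of_eq ?_)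
      rw [norm_smul, norm_smul, Real.norm_eq_abs, Real.norm_eq_abs,
        abs_of_pos (inv_pos.2 ha), ← hs', ← hb']
    have habs2 : |a⁻¹ - b⁻¹| * b = |a - b| / a := by
      rw [show a⁻¹ - b⁻¹ = (b - a) / (a * b) by field_simp, abs_div,
        abs_of_pos (mul_pos ha hb), abs_sub_comm]
      field_simp
    rw [habs2] at h1
    calc N * a ≤ (a⁻¹ * s + |a - b| / a) * a := by nlinarith
      _ = s + |a - b| := by field_simp
  have hNb : N * b ≤ s + |a - b| := by
    have heq : a⁻¹ • x - b⁻¹ • y = b⁻¹ • (x - y) + (a⁻¹ - b⁻¹) • x := by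
      module
    have h1 : N ≤ b⁻¹ * s + |a⁻¹ - b⁻¹| * a := by
      rw [hN', heq]
      refine (norm_add_le _ _).trans (le_of_eq ?_)
      rw [norm_smul, norm_smul, Real.norm_eq_abs, Real.norm_eq_abs,
        abs_of_pos (inv_pos.2 hb), ← hs', ← ha']
    have habs2 : |a⁻¹ - b⁻¹| * a = |a - b| / b := by
      rw [show a⁻¹ - b⁻¹ = (b - a) / (a * b) by field_simp, abs_div,
        abs_of_pos (mul_pos ha hb), abs_sub_comm]
      field_simp
    rw [habs2] at h1
    calc N * b ≤ (b⁻¹ * s + |a - b| / b) * b := by nlinarith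
      _ = s + |a - b| := by field_simp
  rw [div_mul_eq_mul_div, div_le_iff₀ hs]
  have hpos : (0:ℝ) < α * a + β * b := by positivity
  rcases le_total b a with hab | hab
  · -- case b ≤ a : bound by (2α+β)s
    rw [abs_of_nonneg (by linarith : (0:ℝ) ≤ a - b)] at hNa
    have key : (α * a + β * b) * N ≤ (2 * α + β) * s := by
      have e1 : (α * a + β * b) * (N * a) ≤ (α * a + β * b) * (s + (a - b)) :=
        mul_le_mul_of_nonneg_left hNa hpos.le
      have e2 : (s + (a - b)) * a ≤ (2 * a - b) * s := by nlinarith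
      have e3 : (α * a + β * b) * ((s + (a - b)) * a) ≤ (α * a + β * b) * ((2 * a - b) * s) :=
        mul_le_mul_of_nonneg_left e2 hpos.le
      have e4 : (α * a + β * b) * (2 * a - b) ≤ (2 * α + β) * a ^ 2 := by
        nlinarith [sq_nonneg (a - b), mul_pos (mul_pos hα ha) hb]
      have f1 := mul_le_mul_of_nonneg_right e1 ha.le
      have f2 := mul_le_mul_of_nonneg_right e4 hs.le
      have e5 : (α * a + β * b) * N * a ^ 2 ≤ (2 * α + β) * s * a ^ 2 := by nlinarith
      exact le_of_mul_le_mul_right (by nlinarith) (pow_pos ha 2)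
    exact key.trans (mul_le_mul_of_nonneg_right (le_max_left _ _) hs.le)
  · -- case a ≤ b : bound by (α+2β)s
    rw [abs_of_nonpos (by linarith : a - b ≤ 0), neg_sub] at hNa hNb habs
    have key : (α * a + β * b) * N ≤ (α + 2 * β) * s := by
      rcases le_total b (2 * a) with hb2 | hb2
      · -- b ≤ 2a
        have eNa : N * a ≤ s := by
          have e1 : N * b * a ≤ (s + (b - a)) * a := mul_le_mul_of_nonneg_right hNb ha.le
          have e2 : (s + (b - a)) * a ≤ s * b := by nlinarith
          have h5 : N * a * b ≤ s * b := by nlinarith [e1, e2]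
          exact le_of_mul_le_mul_right (by linarith) hb
        have e3 : (α * a + β * b) * (N * a) ≤ (α * a + β * b) * s :=
          mul_le_mul_of_nonneg_left eNa hpos.le
        have e4 : (α * a + β * b) * s ≤ ((α + 2 * β) * a) * s :=
          mul_le_mul_of_nonneg_right (by nlinarith) hs.le
        exact le_of_mul_le_mul_right (by linarith) ha
      · -- 2a ≤ b
        have eNb : N * b ≤ 2 * s := by linarith
        have e1 : (α * a + β * b) * (N * b) ≤ (α * a + β * b) * (2 * s) :=
          mul_le_mul_of_nonneg_left eNb hpos.le
        have e2 : (α * a + β * b) * 2 ≤ (α + 2 * β) * b := by nlinarith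
        have e3 := mul_le_mul_of_nonneg_right e2 hs.le
        exact le_of_mul_le_mul_right (by linarith) hb
    exact key.trans (mul_le_mul_of_nonneg_right (le_max_right _ _) hs.le)

lemma exists_birkhoff_pair (X : Type*) [NormedAddCommGroup X] [NormedSpace ℝ X] [CompleteSpace X]
    (hdim : 2 ≤ Module.rank ℝ X) :
    ∃ x y : X, x ≠ 0 ∧ y ≠ 0 ∧ ‖y‖ = ‖x‖ ∧ BirkhoffOrth x y := by
  have hx0 : ∃ x : X, x ≠ 0 := by
    rw [← rank_pos_iff_exists_ne_zero (R := ℝ)]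
    exact lt_of_lt_of_le (by norm_num) hdim
  obtain ⟨x, hx⟩ := hx0
  obtain ⟨g, hg1, hgx⟩ := exists_dual_vector ℝ x (norm_ne_zero_iff.2 hx)
  have hker : ∃ y : X, y ≠ 0 ∧ g y = 0 := by
    by_contra h
    push_neg at h
    have hinj : ∀ z : X, g z = 0 → z = 0 := fun z hz => by
      by_contra h0; exact h z h0 hz
    have hone : Module.rank ℝ X ≤ 1 := by
      rw [rank_le_one_iff]
      refine ⟨x, fun v => ⟨g v / ‖x‖, ?_⟩⟩
      have hxn : ‖x‖ ≠ 0 := norm_ne_zero_iff.2 hx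
      have : g ((g v / ‖x‖) • x - v) = 0 := by
        simp [map_sub, map_smul, hgx, smul_eq_mul]
        field_simp
        ring
      have := hinj _ this
      rwa [sub_eq_zero] at this
    exact absurd (hdim.trans hone) (by norm_num)
  obtain ⟨y0, hy0, hgy0⟩ := hker
  have hxn : (0:ℝ) < ‖x‖ := norm_pos_iff.2 hx
  have hyn : (0:ℝ) < ‖y0‖ := norm_pos_iff.2 hy0
  refine ⟨x, (‖x‖ / ‖y0‖) • y0, hx, ?_, ?_, ?_⟩
  · exact smul_ne_zero (div_pos hxn hyn).ne' hy0
  · rw [norm_smul, Real.norm_eq_abs, abs_of_pos (div_pos hxn hyn), div_mul_cancel₀ _ hyn.ne']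
  · intro t
    have hgy : g ((‖x‖ / ‖y0‖) • y0) = 0 := by simp [map_smul, hgy0]
    have h1 : ‖x‖ = g (x + t • ((‖x‖ / ‖y0‖) • y0)) := by
      simp [map_add, map_smul, hgy0, hgx]
    have h2 : g (x + t • ((‖x‖ / ‖y0‖) • y0)) ≤ ‖x + t • ((‖x‖ / ‖y0‖) • y0)‖ := by
      calc g _ ≤ |g _| := le_abs_self _
        _ = ‖g _‖ := (Real.norm_eq_abs _).symm
        _ ≤ ‖g‖ * ‖_‖ := g.le_opNorm _
        _ = ‖_‖ := by rw [hg1, one_mul]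
    linarith [h1 ▸ h2]

noncomputable def DWB (X : Type*) [NormedAddCommGroup X] [NormedSpace ℝ X] (α β : ℝ) : ℝ :=
  sSup { r : ℝ | ∃ x y : X, x ≠ 0 ∧ y ≠ 0 ∧ BirkhoffOrth x y ∧
    r = (α * ‖x‖ + β * ‖y‖) / ‖x - y‖ * ‖‖x‖⁻¹ • x - ‖y‖⁻¹ • y‖ }

theorem DWB_bounds (X : Type*) [NormedAddCommGroup X] [NormedSpace ℝ X] [CompleteSpace X]
    (hdim : 2 ≤ Module.rank ℝ X) (α β : ℝ) (hα : 0 < α) (hβ : 0 < β) :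
    α + β ≤ DWB X α β ∧ DWB X α β ≤ max (2 * α + β) (α + 2 * β) := by
  set S := { r : ℝ | ∃ x y : X, x ≠ 0 ∧ y ≠ 0 ∧ BirkhoffOrth x y ∧
    r = (α * ‖x‖ + β * ‖y‖) / ‖x - y‖ * ‖‖x‖⁻¹ • x - ‖y‖⁻¹ • y‖ } with hS
  have hbdd : ∀ r ∈ S, r ≤ max (2 * α + β) (α + 2 * β) := by
    rintro r ⟨x, y, hx, hy, ho, rfl⟩
    exact key_upper hα hβ hx hy ho
  have hBdd : BddAbove S := ⟨_, fun r hr => hbdd r hr⟩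
  have hmem : α + β ∈ S := by
    obtain ⟨x, y, hx, hy, hnorm, ho⟩ := exists_birkhoff_pair X hdim
    refine ⟨x, y, hx, hy, ho, ?_⟩
    have ha : (0:ℝ) < ‖x‖ := norm_pos_iff.2 hx
    have hd : (0:ℝ) < ‖x - y‖ := by
      have := ho (-1)
      rw [neg_one_smul, ← sub_eq_add_neg] at this
      linarith
    rw [hnorm, ← smul_sub, norm_smul, Real.norm_eq_abs, abs_of_pos (inv_pos.2 ha)]
    field_simp
  have hne : S.Nonempty := ⟨_, hmem⟩
  constructor
  · exact le_csSup hBdd hmem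
  · exact csSup_le hne hbdd
end

section
/- For a real Banach space X and α, β > 0, DW_B(X,α,β) = sup{ ‖u+v‖ / ‖(1/α)(1−βt)u + tv‖ : u, v ∈ S_X, u ⊥_B v, 0 < t < 1/β }. -/
lemma birkhoff_smul {X : Type*} [NormedAddCommGroup X] [NormedSpace ℝ X]
    {x y : X} (h : BirkhoffOrth x y) (a b : ℝ) : BirkhoffOrth (a • x) (b • y) := by
  intro t
  rcases eq_or_ne a 0 with rfl | ha
  · simp
  · have hs : t • b • y = a • (a⁻¹ * (t * b)) • y := by
      rw [smul_smul, smul_smul]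
      congr 1
      field_simp
    calc ‖a • x‖ = ‖a‖ * ‖x‖ := norm_smul _ _
      _ ≤ ‖a‖ * ‖x + (a⁻¹ * (t * b)) • y‖ := mul_le_mul_of_nonneg_left (h _) (norm_nonneg a)
      _ = ‖a • (x + (a⁻¹ * (t * b)) • y)‖ := (norm_smul _ _).symm
      _ = ‖a • x + t • b • y‖ := by rw [smul_add, hs]

theorem DWB_eq_sup (X : Type*) [NormedAddCommGroup X] [NormedSpace ℝ X] [CompleteSpace X]
    (α β : ℝ) (hα : 0 < α) (hβ : 0 < β) :
    DWB X α β = sSup { r : ℝ | ∃ u v : X, ‖u‖ = 1 ∧ ‖v‖ = 1 ∧ BirkhoffOrth u v ∧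
      ∃ t : ℝ, 0 < t ∧ t < 1 / β ∧ r = ‖u + v‖ / ‖((1 - β * t) / α) • u + t • v‖ } := by
  unfold DWB
  congr 1
  ext r
  constructor
  · rintro ⟨x, y, hx, hy, hB, rfl⟩
    have hxn : (0:ℝ) < ‖x‖ := norm_pos_iff.mpr hx
    have hyn : (0:ℝ) < ‖y‖ := norm_pos_iff.mpr hy
    set D : ℝ := α * ‖x‖ + β * ‖y‖ with hD
    have hDpos : 0 < D := by positivity
    refine ⟨‖x‖⁻¹ • x, -(‖y‖⁻¹ • y), norm_smul_inv_norm hx, by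
        rw [norm_neg]; exact norm_smul_inv_norm hy, ?_, ‖y‖ / D, div_pos hyn hDpos, ?_, ?_⟩
    · have := birkhoff_smul hB ‖x‖⁻¹ (-‖y‖⁻¹)
      rwa [neg_smul] at this
    · rw [div_lt_div_iff₀ hDpos hβ, one_mul, hD]
      nlinarith
    · have hkey : (1 - β * (‖y‖ / D)) / α = ‖x‖ / D := by
        rw [div_eq_div_iff hα.ne' hDpos.ne']
        field_simp
        ring
      have hsum : ((1 - β * (‖y‖ / D)) / α) • (‖x‖⁻¹ • x) + (‖y‖ / D) • (-(‖y‖⁻¹ • y))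
          = D⁻¹ • (x - y) := by
        rw [hkey, smul_neg, smul_smul, smul_smul, smul_sub, ← sub_eq_add_neg]
        congr 2
        · field_simp
        · field_simp
      rw [hsum, norm_smul, norm_inv, Real.norm_eq_abs, abs_of_pos hDpos,
        ← sub_eq_add_neg, inv_mul_eq_div, div_div_eq_mul_div]
      ring
  · rintro ⟨u, v, hu, hv, hB, t, ht0, ht1, rfl⟩
    have hu0 : u ≠ 0 := by intro h; rw [h, norm_zero] at hu; norm_num at hu
    have hv0 : v ≠ 0 := by intro h; rw [h, norm_zero] at hv; norm_num at hv
    have hc : (0:ℝ) < (1 - β * t) / α := by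
      apply div_pos _ hα
      have : β * t < 1 := by
        rw [lt_div_iff₀ hβ] at ht1; linarith [mul_comm β t ▸ ht1]
      linarith
    refine ⟨((1 - β * t) / α) • u, -(t • v), smul_ne_zero hc.ne' hu0, by
        simpa using smul_ne_zero ht0.ne' hv0, ?_, ?_⟩
    · have := birkhoff_smul hB ((1 - β * t) / α) (-t)
      rwa [neg_smul] at this
    · have h1 : ‖((1 - β * t) / α) • u‖ = (1 - β * t) / α := by
        rw [norm_smul, hu, mul_one, Real.norm_eq_abs, abs_of_pos hc]
      have h2 : ‖-(t • v)‖ = t := by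
        rw [norm_neg, norm_smul, hv, mul_one, Real.norm_eq_abs, abs_of_pos ht0]
      rw [h1, h2]
      have hcoef : α * ((1 - β * t) / α) + β * t = 1 := by field_simp; ring
      have hsub : ((1 - β * t) / α) • u - -(t • v) = ((1 - β * t) / α) • u + t • v := by
        rw [sub_neg_eq_add]
      have hux : ((1 - β * t) / α)⁻¹ • (((1 - β * t) / α) • u) = u := by
        rw [smul_smul, inv_mul_cancel₀ hc.ne', one_smul]
      have hvy : t⁻¹ • (-(t • v)) = -v := by
        rw [smul_neg, smul_smul, inv_mul_cancel₀ ht0.ne', one_smul]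
      rw [hcoef, hsub, hux, hvy, sub_neg_eq_add, one_div_mul_eq_div]
end

section
/- Let X be a real Banach space and α, β > 0. Then min{α,β}·μ(X) ≤ DW_B(X,α,β) ≤ 2·max{α,β}·μ(X), where μ(X) is the rectangular constant. -/
noncomputable def rectConstant (X : Type*) [NormedAddCommGroup X] [NormedSpace ℝ X] : ℝ :=
  sSup { r : ℝ | ∃ x y : X, x ≠ 0 ∧ y ≠ 0 ∧ BirkhoffOrth x y ∧
    r = (‖x‖ + ‖y‖) / ‖x + y‖ }

namespace Real

/- Nonnegativity of `T` stands in for nonemptiness of `S`: in `ℝ`, `sSup ∅ = 0`. -/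

variable {S T : Set ℝ} {c : ℝ}

theorem sSup_le_mul_sSup (hc : 0 ≤ c) (hT : BddAbove T) (hT₀ : ∀ b ∈ T, 0 ≤ b)
    (h : ∀ a ∈ S, ∃ b ∈ T, a ≤ c * b) : sSup S ≤ c * sSup T := by
  refine Real.sSup_le (fun a ha ↦ ?_) (mul_nonneg hc (Real.sSup_nonneg hT₀))
  obtain ⟨b, hb, hab⟩ := h a ha
  exact hab.trans (mul_le_mul_of_nonneg_left (le_csSup hT hb) hc)

theorem mul_sSup_le_sSup (hc : 0 ≤ c) (hT : BddAbove T) (hT₀ : ∀ b ∈ T, 0 ≤ b)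
    (h : ∀ a ∈ S, ∃ b ∈ T, c * a ≤ b) : c * sSup S ≤ sSup T := by
  rw [← smul_eq_mul, ← Real.sSup_smul_of_nonneg hc]
  refine Real.sSup_le ?_ (Real.sSup_nonneg hT₀)
  rintro _ ⟨a, ha, rfl⟩
  obtain ⟨b, hb, hab⟩ := h a ha
  exact hab.trans (le_csSup hT hb)

end Real

section

variable {E : Type*} [NormedAddCommGroup E] [NormedSpace ℝ E]

theorem norm_inv_norm_smul_le_one (x : E) : ‖‖x‖⁻¹ • x‖ ≤ 1 := by
  rw [norm_smul, norm_inv, norm_norm]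
  exact inv_mul_le_one_of_le₀ le_rfl (norm_nonneg x)

theorem norm_inv_norm_smul_sub_inv_norm_smul_le_two (x y : E) :
    ‖‖x‖⁻¹ • x - ‖y‖⁻¹ • y‖ ≤ 2 :=
  (norm_sub_le _ _).trans (by linarith [norm_inv_norm_smul_le_one x, norm_inv_norm_smul_le_one y])

theorem min_mul_add_le {α β a b : ℝ} (ha : 0 ≤ a) (hb : 0 ≤ b) :
    min α β * (a + b) ≤ α * a + β * b := by
  rw [mul_add]
  gcongr
  exacts [min_le_left α β, min_le_right α β]

theorem add_le_max_mul {α β a b : ℝ} (ha : 0 ≤ a) (hb : 0 ≤ b) :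
    α * a + β * b ≤ max α β * (a + b) := by
  rw [mul_add]
  gcongr
  exacts [le_max_left α β, le_max_right α β]

namespace BirkhoffOrth

variable {x y : E}

theorem neg_right (h : BirkhoffOrth x y) : BirkhoffOrth x (-y) := fun t ↦ by
  simpa only [smul_neg, neg_smul] using h (-t)

theorem norm_add_norm_le_three_mul (h : BirkhoffOrth x y) : ‖x‖ + ‖y‖ ≤ 3 * ‖x + y‖ := by
  have hx : ‖x‖ ≤ ‖x + y‖ := by simpa using h 1
  have hy : ‖y‖ ≤ ‖x + y‖ + ‖x‖ := by simpa using norm_sub_le (x + y) x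
  linarith

theorem one_le_norm_inv_norm_smul_add (h : BirkhoffOrth x y) (hx : x ≠ 0) (hy : y ≠ 0) :
    1 ≤ ‖‖x‖⁻¹ • x + ‖y‖⁻¹ • y‖ := by
  have hx₀ : 0 < ‖x‖ := norm_pos_iff.mpr hx
  have hy₀ : 0 < ‖y‖ := norm_pos_iff.mpr hy
  have key : x + (‖x‖ / ‖y‖) • y = ‖x‖ • (‖x‖⁻¹ • x + ‖y‖⁻¹ • y) := by
    rw [smul_add, smul_smul, smul_smul, mul_inv_cancel₀ hx₀.ne', one_smul, div_eq_mul_inv]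
  have horth := h (‖x‖ / ‖y‖)
  rw [key, norm_smul, norm_norm] at horth
  exact one_le_of_le_mul_left₀ hx₀ (by simpa using horth)

theorem norm_add_norm_div_norm_add_le_three (h : BirkhoffOrth x y) :
    (‖x‖ + ‖y‖) / ‖x + y‖ ≤ 3 :=
  div_le_of_le_mul₀ (norm_nonneg _) zero_le_three h.norm_add_norm_le_three_mul

theorem min_mul_norm_add_norm_div_le {α β : ℝ} (h : BirkhoffOrth x y) (hx : x ≠ 0) (hy : y ≠ 0)
    (hα : 0 ≤ α) (hβ : 0 ≤ β) :
    min α β * ((‖x‖ + ‖y‖) / ‖x + y‖) ≤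
      (α * ‖x‖ + β * ‖y‖) / ‖x + y‖ * ‖‖x‖⁻¹ • x + ‖y‖⁻¹ • y‖ :=
  calc min α β * ((‖x‖ + ‖y‖) / ‖x + y‖) = min α β * (‖x‖ + ‖y‖) / ‖x + y‖ :=
        (mul_div_assoc _ _ _).symm
    _ ≤ (α * ‖x‖ + β * ‖y‖) / ‖x + y‖ := by
        gcongr; exact min_mul_add_le (norm_nonneg x) (norm_nonneg y)
    _ ≤ (α * ‖x‖ + β * ‖y‖) / ‖x + y‖ * ‖‖x‖⁻¹ • x + ‖y‖⁻¹ • y‖ :=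
        le_mul_of_one_le_right (by positivity) (h.one_le_norm_inv_norm_smul_add hx hy)

end BirkhoffOrth

theorem weighted_norm_div_mul_norm_sub_le {α β : ℝ} (x y : E) (hαβ : 0 ≤ max α β) :
    (α * ‖x‖ + β * ‖y‖) / ‖x - y‖ * ‖‖x‖⁻¹ • x - ‖y‖⁻¹ • y‖ ≤
      2 * max α β * ((‖x‖ + ‖y‖) / ‖x - y‖) :=
  calc (α * ‖x‖ + β * ‖y‖) / ‖x - y‖ * ‖‖x‖⁻¹ • x - ‖y‖⁻¹ • y‖
      ≤ max α β * (‖x‖ + ‖y‖) / ‖x - y‖ * 2 := by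
        gcongr
        · exact add_le_max_mul (norm_nonneg x) (norm_nonneg y)
        · exact norm_inv_norm_smul_sub_inv_norm_smul_le_two x y
    _ = 2 * max α β * ((‖x‖ + ‖y‖) / ‖x - y‖) := by ring

end

theorem DWB_rect_bounds_general (X : Type*) [NormedAddCommGroup X] [NormedSpace ℝ X]
    (α β : ℝ) (hα : 0 < α) (hβ : 0 < β) :
    min α β * rectConstant X ≤ DWB X α β ∧ DWB X α β ≤ 2 * max α β * rectConstant X := by
  unfold DWB rectConstant
  set R : Set ℝ := { r : ℝ | ∃ x y : X, x ≠ 0 ∧ y ≠ 0 ∧ BirkhoffOrth x y ∧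
    r = (‖x‖ + ‖y‖) / ‖x + y‖ }
  set D : Set ℝ := { r : ℝ | ∃ x y : X, x ≠ 0 ∧ y ≠ 0 ∧ BirkhoffOrth x y ∧
    r = (α * ‖x‖ + β * ‖y‖) / ‖x - y‖ * ‖‖x‖⁻¹ • x - ‖y‖⁻¹ • y‖ }
  have hR₀ : ∀ r ∈ R, 0 ≤ r := by rintro _ ⟨x, y, -, -, -, rfl⟩; positivity
  have hD₀ : ∀ r ∈ D, 0 ≤ r := by rintro _ ⟨x, y, -, -, -, rfl⟩; positivity
  have hR₃ : ∀ r ∈ R, r ≤ 3 := by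
    rintro _ ⟨x, y, -, -, h, rfl⟩; exact h.norm_add_norm_div_norm_add_le_three
  have upper : ∀ r ∈ D, ∃ s ∈ R, r ≤ 2 * max α β * s := by
    rintro _ ⟨x, y, hx, hy, h, rfl⟩
    refine ⟨_, ⟨x, -y, hx, neg_ne_zero.mpr hy, h.neg_right, rfl⟩, ?_⟩
    simpa only [norm_neg, ← sub_eq_add_neg]
      using weighted_norm_div_mul_norm_sub_le x y (le_max_of_le_left hα.le)
  have lower : ∀ r ∈ R, ∃ s ∈ D, min α β * r ≤ s := by
    rintro _ ⟨x, y, hx, hy, h, rfl⟩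
    refine ⟨_, ⟨x, -y, hx, neg_ne_zero.mpr hy, h.neg_right, rfl⟩, ?_⟩
    simpa only [norm_neg, sub_neg_eq_add, smul_neg]
      using h.min_mul_norm_add_norm_div_le hx hy hα.le hβ.le
  have hD : BddAbove D := ⟨2 * max α β * 3, fun r hr ↦ by
    obtain ⟨s, hs, hrs⟩ := upper r hr
    exact hrs.trans (by gcongr; exact hR₃ s hs)⟩
  exact ⟨Real.mul_sSup_le_sSup (by positivity) hD hD₀ lower,
    Real.sSup_le_mul_sSup (by positivity) ⟨3, hR₃⟩ hR₀ upper⟩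

theorem DWB_rect_bounds (X : Type*) [NormedAddCommGroup X] [NormedSpace ℝ X] [CompleteSpace X]
    (α β : ℝ) (hα : 0 < α) (hβ : 0 < β) :
    min α β * rectConstant X ≤ DWB X α β ∧ DWB X α β ≤ 2 * max α β * rectConstant X :=
  DWB_rect_bounds_general X α β hα hβ
end

section
/- If x ⊥_B y for nonzero x, y in a real normed space and ‖x‖ ≤ ‖y‖, then for α, β > 0, (α‖x‖+β‖y‖)/‖x−y‖ · ‖x/‖x‖ − y/‖y‖‖ ≤ α + 2β. -/
/-!
Write `u = ‖x‖⁻¹ • x - ‖y‖⁻¹ • y`. Rescaling `u` by `‖y‖` gives `(x - y) + (‖y‖/‖x‖ - 1) • x`,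
whose norm is at most `‖x - y‖ + (‖y‖ - ‖x‖) ≤ 2‖x - y‖` in any normed space. Rescaling by `‖x‖`
gives the convex combination `(1 - c) • x + c • (x - y)` with `c = ‖x‖/‖y‖`, and Birkhoff
orthogonality (at `t = -1`) gives `‖x‖ ≤ ‖x - y‖`, so its norm is at most `‖x - y‖`.
Weighting the two bounds by `α` and `β` gives the claim.
-/

section

variable {X : Type*} [NormedAddCommGroup X] [NormedSpace ℝ X] {x y : X}

theorem BirkhoffOrth.norm_le_norm_sub (h : BirkhoffOrth x y) : ‖x‖ ≤ ‖x - y‖ := by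
  simpa [sub_eq_add_neg] using h (-1)

variable (x y) in
theorem norm_mul_norm_inv_norm_smul_sub_le_two_mul :
    ‖y‖ * ‖‖x‖⁻¹ • x - ‖y‖⁻¹ • y‖ ≤ 2 * ‖x - y‖ := by
  rcases eq_or_ne y 0 with rfl | hy
  · simp
  rcases eq_or_ne x 0 with rfl | hx
  · simp [norm_smul, hy]
  have hnx : 0 < ‖x‖ := norm_pos_iff.mpr hx
  have hny : 0 < ‖y‖ := norm_pos_iff.mpr hy
  have key : ‖y‖ • (‖x‖⁻¹ • x - ‖y‖⁻¹ • y) = (x - y) + (‖y‖ * ‖x‖⁻¹ - 1) • x := by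
    rw [smul_sub, smul_inv_smul₀ hny.ne', smul_smul]
    module
  have hscale : ‖(‖y‖ * ‖x‖⁻¹ - 1) • x‖ = |‖y‖ - ‖x‖| := by
    rw [norm_smul, Real.norm_eq_abs, ← abs_of_pos hnx, ← abs_mul, abs_of_pos hnx]
    congr 1
    field_simp
  calc ‖y‖ * ‖‖x‖⁻¹ • x - ‖y‖⁻¹ • y‖
      = ‖(x - y) + (‖y‖ * ‖x‖⁻¹ - 1) • x‖ := by
        rw [← key, norm_smul, Real.norm_of_nonneg (norm_nonneg y)]
    _ ≤ ‖x - y‖ + |‖y‖ - ‖x‖| := hscale ▸ norm_add_le _ _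
    _ ≤ 2 * ‖x - y‖ := by
        have := abs_norm_sub_norm_le y x
        rw [norm_sub_rev] at this
        linarith

theorem norm_mul_norm_inv_norm_smul_sub_le_of_norm_le (hle : ‖x‖ ≤ ‖y‖)
    (hxy : ‖x‖ ≤ ‖x - y‖) : ‖x‖ * ‖‖x‖⁻¹ • x - ‖y‖⁻¹ • y‖ ≤ ‖x - y‖ := by
  rcases eq_or_ne x 0 with rfl | hx
  · simp
  have hnx : 0 < ‖x‖ := norm_pos_iff.mpr hx
  have hny : 0 < ‖y‖ := hnx.trans_le hle
  set c := ‖x‖ / ‖y‖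
  have hc0 : 0 ≤ c := by positivity
  have hc1 : c ≤ 1 := (div_le_one hny).mpr hle
  have key : ‖x‖ • (‖x‖⁻¹ • x - ‖y‖⁻¹ • y) = (1 - c) • x + c • (x - y) := by
    rw [smul_sub, smul_inv_smul₀ hnx.ne', smul_smul]
    module
  calc ‖x‖ * ‖‖x‖⁻¹ • x - ‖y‖⁻¹ • y‖
      = ‖(1 - c) • x + c • (x - y)‖ := by
        rw [← key, norm_smul, Real.norm_of_nonneg (norm_nonneg x)]
    _ ≤ (1 - c) * ‖x‖ + c * ‖x - y‖ := by
        refine (norm_add_le _ _).trans_eq ?_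
        rw [norm_smul, norm_smul, Real.norm_of_nonneg (sub_nonneg.mpr hc1),
          Real.norm_of_nonneg hc0]
    _ ≤ ‖x - y‖ := by nlinarith

end

theorem birkhoff_bound_general {X : Type*} [NormedAddCommGroup X] [NormedSpace ℝ X]
    (x y : X) (hx : x ≠ 0) (hB : BirkhoffOrth x y) (hle : ‖x‖ ≤ ‖y‖)
    (α β : ℝ) (hα : 0 < α) (hβ : 0 < β) :
    (α * ‖x‖ + β * ‖y‖) / ‖x - y‖ * ‖‖x‖⁻¹ • x - ‖y‖⁻¹ • y‖ ≤ α + 2 * β := by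
  have hxy := hB.norm_le_norm_sub
  have hsmall := norm_mul_norm_inv_norm_smul_sub_le_of_norm_le hle hxy
  have hlarge := norm_mul_norm_inv_norm_smul_sub_le_two_mul x y
  rw [div_mul_eq_mul_div, div_le_iff₀ ((norm_pos_iff.mpr hx).trans_le hxy)]
  linear_combination α * hsmall + β * hlarge

theorem birkhoff_bound {X : Type*} [NormedAddCommGroup X] [NormedSpace ℝ X]
    (x y : X) (hx : x ≠ 0) (hy : y ≠ 0) (hB : BirkhoffOrth x y) (hle : ‖x‖ ≤ ‖y‖)
    (α β : ℝ) (hα : 0 < α) (hβ : 0 < β) :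
    (α * ‖x‖ + β * ‖y‖) / ‖x - y‖ * ‖‖x‖⁻¹ • x - ‖y‖⁻¹ • y‖ ≤ α + 2 * β :=
  birkhoff_bound_general x y hx hB hle α β hα hβ
end
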